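/- arXiv:1310.4953 — 11 statements merged into one kernel-verified Lean document; each statement's English description precedes it below -/
import Mathlib

section
/- Let f^(σ), σ ∈ A, be a finite family of order-preserving sup-norm contractions with factor λ < 1 on ℝⁿ, with f the pointwise minimum attained by some policy at every point. If v^k is the unique fixed point of f^(σ_k) and σ_{k+1} is chosen so that f(v^k) = f^(σ_{k+1})(v^k), then v ≤ v^{k+1} ≤ f(v^k) ≤ v^k, where v is the unique fixed point of f and v^{k+1} is the unique fixed point of f^(σ_{k+1}). -/
open NNReal

/-! The iterates of a monotone contraction started at a point `x` with `g x ≤ x` decrease and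
converge to the fixed point, which is therefore below `x`. Applied to `F σₖ₊₁` at `f vₖ` and to the
pointwise minimum `f` at `vₖ₊₁` this gives the two nontrivial inequalities; `f` is again a monotone
contraction because at every point it coincides with one of the `F σ`. -/

theorem ContractingWith.le_of_isFixedPt_of_map_le {α : Type*} [MetricSpace α] [CompleteSpace α]
    [Preorder α] [ClosedIicTopology α] {K : ℝ≥0} {g : α → α} (hg : ContractingWith K g)
    (hmono : Monotone g) {p x : α} (hp : Function.IsFixedPt g p) (hx : g x ≤ x) : p ≤ x := by
  have : Nonempty α := ⟨p⟩
  rw [hg.fixedPoint_unique hp]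
  exact le_of_tendsto' (hg.tendsto_iterate_fixedPoint x) fun m =>
    Monotone.antitone_iterate_of_map_le hmono hx (Nat.zero_le m)

theorem contractingWith_of_norm_sub_le {E : Type*} [NormedAddCommGroup E] {lam : ℝ}
    (hlam0 : 0 ≤ lam) (hlam1 : lam < 1) {g : E → E}
    (hg : ∀ v w, ‖g v - g w‖ ≤ lam * ‖v - w‖) : ContractingWith ⟨lam, hlam0⟩ g :=
  ⟨hlam1, LipschitzWith.of_dist_le_mul fun v w => by rw [dist_eq_norm, dist_eq_norm]; exact hg v w⟩

section PointwiseMin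

variable {A : Type*}

theorem monotone_of_forall_le_of_exists_eq {α : Type*} [Preorder α] {F : A → α → α} {f : α → α}
    (hmono : ∀ σ, Monotone (F σ))
    (hle : ∀ v σ, f v ≤ F σ v) (hatt : ∀ v, ∃ σ, f v = F σ v) : Monotone f := by
  intro a b hab
  obtain ⟨σ, hσ⟩ := hatt b
  calc f a ≤ F σ a := hle a σ
    _ ≤ F σ b := hmono σ hab
    _ = f b := hσ.symm

theorem lipschitzWith_of_forall_le_of_exists_eq {ι : Type*} [Fintype ι] {F : A → (ι → ℝ) → ι → ℝ}
    {f : (ι → ℝ) → ι → ℝ} {K : ℝ≥0} (hF : ∀ σ, LipschitzWith K (F σ))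
    (hle : ∀ v σ, f v ≤ F σ v) (hatt : ∀ v, ∃ σ, f v = F σ v) : LipschitzWith K f := by
  have half : ∀ a b i, f a i - f b i ≤ K * dist a b := by
    intro a b i
    obtain ⟨σ, hσ⟩ := hatt b
    calc f a i - f b i ≤ F σ a i - F σ b i := by
          rw [hσ]; exact sub_le_sub_right (hle a σ i) _
      _ ≤ dist (F σ a i) (F σ b i) := Real.sub_le_dist _ _
      _ ≤ dist (F σ a) (F σ b) := dist_le_pi_dist _ _ i
      _ ≤ K * dist a b := (hF σ).dist_le_mul a b
  refine LipschitzWith.of_dist_le_mul fun a b => (dist_pi_le_iff (by positivity)).2 fun i => ?_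
  rw [Real.dist_eq, abs_sub_le_iff]
  exact ⟨half a b i, dist_comm a b ▸ half b a i⟩

end PointwiseMin

theorem policy_iteration_monotone_step_general {n : ℕ} {A : Type*}
    (lam : ℝ) (hlam0 : 0 ≤ lam) (hlam1 : lam < 1)
    (F : A → (Fin n → ℝ) → (Fin n → ℝ))
    (hmono : ∀ σ, Monotone (F σ))
    (hcontr : ∀ σ v w, ‖F σ v - F σ w‖ ≤ lam * ‖v - w‖)
    (f : (Fin n → ℝ) → (Fin n → ℝ))
    (hle : ∀ v σ, f v ≤ F σ v)
    (hatt : ∀ v, ∃ σ, f v = F σ v)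
    (σk σk1 : A) (vk vk1 v : Fin n → ℝ)
    (hvk : F σk vk = vk)
    (hσk1 : f vk = F σk1 vk)
    (hvk1 : F σk1 vk1 = vk1)
    (hv : f v = v) :
    v ≤ vk1 ∧ vk1 ≤ f vk ∧ f vk ≤ vk := by
  have hF σ := contractingWith_of_norm_sub_le hlam0 hlam1 (hcontr σ)
  have hf : ContractingWith ⟨lam, hlam0⟩ f :=
    ⟨hlam1, lipschitzWith_of_forall_le_of_exists_eq (fun σ => (hF σ).2) hle hatt⟩
  have hfvk : f vk ≤ vk := (hle vk σk).trans_eq hvk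
  refine ⟨?_, ?_, hfvk⟩
  · exact hf.le_of_isFixedPt_of_map_le (monotone_of_forall_le_of_exists_eq hmono hle hatt) hv
      ((hle vk1 σk1).trans_eq hvk1)
  · refine (hF σk1).le_of_isFixedPt_of_map_le (hmono σk1) hvk1 ?_
    calc F σk1 (f vk) ≤ F σk1 vk := hmono σk1 hfvk
      _ = f vk := hσk1.symm

/-- One step of policy iteration: if `vk` is the fixed point of
`F σk`, `σk1` is an improved policy at `vk`, `vk1` the fixed point of `F σk1`,
and `v` the fixed point of `f = min_σ F σ`, then `v ≤ vk1 ≤ f vk ≤ vk`. -/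
theorem policy_iteration_monotone_step {n : ℕ} {A : Type*} [Fintype A] [Nonempty A]
    (lam : ℝ) (hlam0 : 0 ≤ lam) (hlam1 : lam < 1)
    (F : A → (Fin n → ℝ) → (Fin n → ℝ))
    (hmono : ∀ σ, Monotone (F σ))
    (hcontr : ∀ σ v w, ‖F σ v - F σ w‖ ≤ lam * ‖v - w‖)
    (f : (Fin n → ℝ) → (Fin n → ℝ))
    (hle : ∀ v σ, f v ≤ F σ v)
    (hatt : ∀ v, ∃ σ, f v = F σ v)
    (σk σk1 : A) (vk vk1 v : Fin n → ℝ)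
    (hvk : F σk vk = vk)
    (hσk1 : f vk = F σk1 vk)
    (hvk1 : F σk1 vk1 = vk1)
    (hv : f v = v) :
    v ≤ vk1 ∧ vk1 ≤ f vk ∧ f vk ≤ vk :=
  policy_iteration_monotone_step_general lam hlam0 hlam1 F hmono hcontr f hle hatt σk σk1 vk vk1 v
    hvk hσk1 hvk1 hv
end

section
/- Under the assumptions of the policy iteration step (v^k fixed point of f^(σ_k), σ_{k+1} optimal at v^k, v^{k+1} fixed point of f^(σ_{k+1}), v fixed point of f), the sup-norm contraction property ‖v^{k+1} − v‖∞ ≤ λ ‖v^k − v‖∞ holds. -/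
/-!
Comparison principle: if `T` is a monotone sup-norm `λ`-contraction with fixed point `p`, then
`T u ≤ u` forces `p ≤ u` and `u ≤ T u` forces `u ≤ p`, because in either case a nonnegative
vector `x - y` is dominated by `T x - T y` and so has norm at most `λ` times its own.
Applied to `f^(σ_{k+1})` this gives `v ≤ v^{k+1} ≤ v^k`, and then, for `σ` attaining the
minimum at `v`,
`0 ≤ v^{k+1} - v ≤ f^(σ_{k+1})(v^k) - v = f(v^k) - f(v) ≤ f^(σ)(v^k) - f^(σ)(v)`.
-/

section MonotoneContraction

variable {ι : Type*} [Fintype ι]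

theorem pi_norm_le_norm_of_nonneg_of_le {x y : ι → ℝ} (hx : 0 ≤ x) (hxy : x ≤ y) :
    ‖x‖ ≤ ‖y‖ := by
  refine (pi_norm_le_iff_of_nonneg (norm_nonneg y)).2 fun i => ?_
  calc ‖x i‖ = x i := Real.norm_of_nonneg (hx i)
    _ ≤ y i := hxy i
    _ ≤ ‖y i‖ := Real.le_norm_self _
    _ ≤ ‖y‖ := norm_le_pi_norm y i

variable {T : (ι → ℝ) → (ι → ℝ)} {lam : ℝ}

theorem eq_of_le_of_sub_le_map_sub (hlam : lam < 1)
    (hT : ∀ v w, ‖T v - T w‖ ≤ lam * ‖v - w‖) {x y : ι → ℝ} (hyx : y ≤ x)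
    (hsub : x - y ≤ T x - T y) : x = y := by
  have hle : ‖x - y‖ ≤ lam * ‖x - y‖ :=
    (pi_norm_le_norm_of_nonneg_of_le (sub_nonneg.2 hyx) hsub).trans (hT x y)
  have hzero : ‖x - y‖ = 0 := by nlinarith [norm_nonneg (x - y)]
  exact sub_eq_zero.1 (norm_eq_zero.1 hzero)

theorem le_of_map_le_of_fixed (hlam : lam < 1) (hmono : Monotone T)
    (hT : ∀ v w, ‖T v - T w‖ ≤ lam * ‖v - w‖) {p u : ι → ℝ} (hp : T p = p)
    (hu : T u ≤ u) :
    p ≤ u := by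
  have hsub : p ⊔ u - u ≤ T (p ⊔ u) - T u := by
    intro i
    have hpw : p i ≤ T (p ⊔ u) i := (congrFun hp i).ge.trans (hmono le_sup_left i)
    have huw : T u i ≤ T (p ⊔ u) i := hmono le_sup_right i
    simp only [Pi.sub_apply, Pi.sup_apply]
    rcases le_total (p i) (u i) with h | h
    · rw [max_eq_right h]; linarith
    · rw [max_eq_left h]; linarith [hu i]
  rw [← eq_of_le_of_sub_le_map_sub hlam hT le_sup_right hsub]
  exact le_sup_left

theorem le_of_le_map_of_fixed (hlam : lam < 1) (hmono : Monotone T)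
    (hT : ∀ v w, ‖T v - T w‖ ≤ lam * ‖v - w‖) {p u : ι → ℝ} (hp : T p = p)
    (hu : u ≤ T u) :
    u ≤ p := by
  have hsub : u - p ⊓ u ≤ T u - T (p ⊓ u) := by
    intro i
    have hwp : T (p ⊓ u) i ≤ p i := (hmono inf_le_left i).trans (congrFun hp i).le
    have hwu : T (p ⊓ u) i ≤ T u i := hmono inf_le_right i
    simp only [Pi.sub_apply, Pi.inf_apply]
    rcases le_total (p i) (u i) with h | h
    · rw [min_eq_left h]; linarith [hu i]
    · rw [min_eq_right h]; linarith
  rw [eq_of_le_of_sub_le_map_sub hlam hT inf_le_right hsub]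
  exact inf_le_left

end MonotoneContraction

theorem policy_iteration_contraction_general {n : ℕ} {A : Type*}
    (lam : ℝ) (hlam1 : lam < 1)
    (F : A → (Fin n → ℝ) → (Fin n → ℝ))
    (hmono : ∀ σ, Monotone (F σ))
    (hcontr : ∀ σ v w, ‖F σ v - F σ w‖ ≤ lam * ‖v - w‖)
    (f : (Fin n → ℝ) → (Fin n → ℝ))
    (hle : ∀ v σ, f v ≤ F σ v)
    (hatt : ∀ v, ∃ σ, f v = F σ v)
    (σk σk1 : A) (vk vk1 v : Fin n → ℝ)
    (hvk : F σk vk = vk)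
    (hσk1 : f vk = F σk1 vk)
    (hvk1 : F σk1 vk1 = vk1)
    (hv : f v = v) :
    ‖vk1 - v‖ ≤ lam * ‖vk - v‖ := by
  have hvk1_le_vk : vk1 ≤ vk :=
    le_of_map_le_of_fixed hlam1 (hmono σk1) (hcontr σk1) hvk1
      ((hσk1.symm.trans_le (hle vk σk)).trans_eq hvk)
  have hv_le_vk1 : v ≤ vk1 :=
    le_of_le_map_of_fixed hlam1 (hmono σk1) (hcontr σk1) hvk1 (hv.symm.trans_le (hle v σk1))
  obtain ⟨σ, hσ⟩ := hatt v
  have hsub : vk1 - v ≤ F σ vk - F σ v := by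
    have hvk1_le : vk1 ≤ F σ vk :=
      calc vk1 = F σk1 vk1 := hvk1.symm
        _ ≤ F σk1 vk := hmono σk1 hvk1_le_vk
        _ = f vk := hσk1.symm
        _ ≤ F σ vk := hle vk σ
    rw [← hσ, hv]
    exact sub_le_sub_right hvk1_le v
  calc ‖vk1 - v‖ ≤ ‖F σ vk - F σ v‖ :=
        pi_norm_le_norm_of_nonneg_of_le (sub_nonneg.2 hv_le_vk1) hsub
    _ ≤ lam * ‖vk - v‖ := hcontr σ vk v

/-- The values produced by policy iteration contract towards the
fixed point of `f` in the sup-norm: `‖vk1 - v‖ ≤ λ ‖vk - v‖`. -/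
theorem policy_iteration_contraction {n : ℕ} {A : Type*} [Fintype A] [Nonempty A]
    (lam : ℝ) (hlam0 : 0 ≤ lam) (hlam1 : lam < 1)
    (F : A → (Fin n → ℝ) → (Fin n → ℝ))
    (hmono : ∀ σ, Monotone (F σ))
    (hcontr : ∀ σ v w, ‖F σ v - F σ w‖ ≤ lam * ‖v - w‖)
    (f : (Fin n → ℝ) → (Fin n → ℝ))
    (hle : ∀ v σ, f v ≤ F σ v)
    (hatt : ∀ v, ∃ σ, f v = F σ v)
    (σk σk1 : A) (vk vk1 v : Fin n → ℝ)
    (hvk : F σk vk = vk)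
    (hσk1 : f vk = F σk1 vk)
    (hvk1 : F σk1 vk1 = vk1)
    (hv : f v = v) :
    ‖vk1 - v‖ ≤ lam * ‖vk - v‖ :=
  policy_iteration_contraction_general lam hlam1 F hmono hcontr f hle hatt σk σk1 vk vk1 v hvk hσk1
    hvk1 hv
end

section
/- In the policy iteration algorithm generated by sequences (σ_k, v^k), for all t ≥ k + p with p = 1 + ⌊log(1−λ)/log(λ)⌋, one has ‖R^(σ_t)‖∞ ≤ μ ‖R^(σ_k)‖∞ where μ = λ^p/(1−λ) < 1. -/
/-!
Let `V k` be the value of the `k`-th policy and `v` the fixed point of `f`. A monotone contraction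
sends a sub-solution up and a super-solution down along iterates converging to its fixed point, so
`v ≤ V (k+1) ≤ V k`; and for a policy `a` attaining `f v` one gets
`0 ≤ V (k+1) - v ≤ F a (V k) - F a v`, whence `‖V (k+1) - v‖ ≤ λ ‖V k - v‖` in any solid norm.
The residual is squeezed by `0 ≤ F (σ k) v - v ≤ V k - v` and `(1 - λ) ‖V k - v‖ ≤ ‖F (σ k) v - v‖`,
so after `p` steps it drops by `λ ^ p / (1 - λ)`, which is `< 1` because `p > log (1 - λ) / log λ`.
-/

open Function Filter Topology

instance Pi.hasSolidNorm {ι : Type*} [Fintype ι] {β : ι → Type*} [∀ i, NormedAddCommGroup (β i)]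
    [∀ i, Lattice (β i)] [∀ i, HasSolidNorm (β i)] : HasSolidNorm (∀ i, β i) where
  solid _ y hxy := pi_norm_le_iff_of_nonneg (norm_nonneg y) |>.2 fun i =>
    (norm_le_norm_of_abs_le_abs (hxy i)).trans (norm_le_pi_norm y i)

theorem norm_le_norm_of_nonneg_of_le {α : Type*} [NormedAddCommGroup α] [Lattice α]
    [HasSolidNorm α] [IsOrderedAddMonoid α] {a b : α} (ha : 0 ≤ a) (hab : a ≤ b) :
    ‖a‖ ≤ ‖b‖ :=
  norm_le_norm_of_abs_le_abs <| by rwa [abs_of_nonneg ha, abs_of_nonneg (ha.trans hab)]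

theorem pow_lt_of_log_div_log_lt {lam a : ℝ} {p : ℕ} (hlam0 : 0 < lam) (hlam1 : lam < 1)
    (ha : 0 < a) (hp : Real.log a / Real.log lam < p) : lam ^ p < a := by
  rw [← Real.log_lt_log_iff (pow_pos hlam0 p) ha, Real.log_pow]
  exact (div_lt_iff_of_neg (Real.log_neg hlam0 hlam1)).1 hp

section Contraction

variable {E : Type*} [NormedAddCommGroup E] {g : E → E} {lam : ℝ} {w : E}

theorem norm_iterate_sub_le_of_isFixedPt (hlam : 0 ≤ lam)
    (hg : ∀ a b, ‖g a - g b‖ ≤ lam * ‖a - b‖) (hw : IsFixedPt g w) (x : E) (k : ℕ) :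
    ‖g^[k] x - w‖ ≤ lam ^ k * ‖x - w‖ :=
  le_geom (u := fun k => ‖g^[k] x - w‖) hlam k fun j _ => by
    simpa only [iterate_succ_apply', hw.eq] using hg (g^[j] x) w

theorem tendsto_iterate_of_isFixedPt (hlam0 : 0 ≤ lam) (hlam1 : lam < 1)
    (hg : ∀ a b, ‖g a - g b‖ ≤ lam * ‖a - b‖) (hw : IsFixedPt g w) (x : E) :
    Tendsto (fun k => g^[k] x) atTop (𝓝 w) := by
  refine tendsto_iff_norm_sub_tendsto_zero.2 <| squeeze_zero (fun _ => norm_nonneg _)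
    (norm_iterate_sub_le_of_isFixedPt hlam0 hg hw x) ?_
  simpa using (tendsto_pow_atTop_nhds_zero_of_lt_one hlam0 hlam1).mul_const ‖x - w‖

theorem norm_sub_le_of_isFixedPt (hlam1 : lam < 1)
    (hg : ∀ a b, ‖g a - g b‖ ≤ lam * ‖a - b‖) (hw : IsFixedPt g w) (x : E) :
    ‖w - x‖ ≤ ‖g x - x‖ / (1 - lam) := by
  rw [le_div_iff₀ (sub_pos.2 hlam1)]
  have hcontr : ‖w - g x‖ ≤ lam * ‖w - x‖ := by
    simpa only [hw.eq] using hg w x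
  have htri : ‖w - x‖ ≤ ‖w - g x‖ + ‖g x - x‖ := norm_sub_le_norm_sub_add_norm_sub w (g x) x
  linarith

variable [PartialOrder E] [OrderClosedTopology E]

theorem le_of_le_map_of_isFixedPt (hlam0 : 0 ≤ lam) (hlam1 : lam < 1) (hmono : Monotone g)
    (hg : ∀ a b, ‖g a - g b‖ ≤ lam * ‖a - b‖) (hw : IsFixedPt g w) {x : E} (hx : x ≤ g x) :
    x ≤ w :=
  ge_of_tendsto' (tendsto_iterate_of_isFixedPt hlam0 hlam1 hg hw x) fun k =>
    hmono.monotone_iterate_of_le_map hx (Nat.zero_le k)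

theorem le_of_map_le_of_isFixedPt (hlam0 : 0 ≤ lam) (hlam1 : lam < 1) (hmono : Monotone g)
    (hg : ∀ a b, ‖g a - g b‖ ≤ lam * ‖a - b‖) (hw : IsFixedPt g w) {x : E} (hx : g x ≤ x) :
    w ≤ x :=
  le_of_tendsto' (tendsto_iterate_of_isFixedPt hlam0 hlam1 hg hw x) fun k =>
    hmono.antitone_iterate_of_map_le hx (Nat.zero_le k)

end Contraction

namespace PolicyIteration

variable {E A : Type*} [NormedAddCommGroup E] [Lattice E] [HasSolidNorm E] [IsOrderedAddMonoid E]
  {lam : ℝ} {F : A → E → E} {f : E → E} {v : E}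

theorem le_value (hlam0 : 0 ≤ lam) (hlam1 : lam < 1) (hmono : ∀ a, Monotone (F a))
    (hcontr : ∀ a x y, ‖F a x - F a y‖ ≤ lam * ‖x - y‖) (hle : ∀ x a, f x ≤ F a x)
    (hv : f v = v) {a : A} {w : E} (hw : IsFixedPt (F a) w) : v ≤ w :=
  le_of_le_map_of_isFixedPt hlam0 hlam1 (hmono a) (hcontr a) hw (hv.ge.trans (hle v a))

theorem norm_residual_le (hmono : ∀ a, Monotone (F a)) (hle : ∀ x a, f x ≤ F a x)
    (hv : f v = v) {a : A} {w : E} (hw : IsFixedPt (F a) w) (hvw : v ≤ w) :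
    ‖F a v - v‖ ≤ ‖w - v‖ := by
  have hres : 0 ≤ F a v - v := sub_nonneg.2 (hv.ge.trans (hle v a))
  refine norm_le_norm_of_nonneg_of_le hres (sub_le_sub_right ?_ v)
  simpa only [hw.eq] using hmono a hvw

variable {σ : ℕ → A} {V : ℕ → E}

theorem value_succ_le (hlam0 : 0 ≤ lam) (hlam1 : lam < 1) (hmono : ∀ a, Monotone (F a))
    (hcontr : ∀ a x y, ‖F a x - F a y‖ ≤ lam * ‖x - y‖) (hle : ∀ x a, f x ≤ F a x)
    (hfix : ∀ k, F (σ k) (V k) = V k) (himp : ∀ k, f (V k) = F (σ (k+1)) (V k)) (k : ℕ) :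
    V (k+1) ≤ V k :=
  le_of_map_le_of_isFixedPt hlam0 hlam1 (hmono _) (hcontr _) (hfix (k+1)) <|
    (himp k ▸ hle (V k) (σ k)).trans_eq (hfix k)

theorem norm_value_succ_sub_le (hlam0 : 0 ≤ lam) (hlam1 : lam < 1)
    (hmono : ∀ a, Monotone (F a)) (hcontr : ∀ a x y, ‖F a x - F a y‖ ≤ lam * ‖x - y‖)
    (hle : ∀ x a, f x ≤ F a x) (hatt : ∀ x, ∃ a, f x = F a x)
    (hfix : ∀ k, F (σ k) (V k) = V k) (himp : ∀ k, f (V k) = F (σ (k+1)) (V k))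
    (hv : f v = v) (k : ℕ) :
    ‖V (k+1) - v‖ ≤ lam * ‖V k - v‖ := by
  obtain ⟨a, ha⟩ := hatt v
  have hva : IsFixedPt (F a) v := ha.symm.trans hv
  have hstep : V (k+1) ≤ F a (V k) :=
    calc V (k+1) = F (σ (k+1)) (V (k+1)) := (hfix (k+1)).symm
      _ ≤ F (σ (k+1)) (V k) :=
        hmono _ (value_succ_le hlam0 hlam1 hmono hcontr hle hfix himp k)
      _ = f (V k) := (himp k).symm
      _ ≤ F a (V k) := hle _ _
  calc ‖V (k+1) - v‖ ≤ ‖F a (V k) - F a v‖ := by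
        refine norm_le_norm_of_nonneg_of_le ?_ ?_
        · exact sub_nonneg.2 (le_value hlam0 hlam1 hmono hcontr hle hv (hfix (k+1)))
        · rw [hva.eq]; exact sub_le_sub_right hstep v
    _ ≤ lam * ‖V k - v‖ := hcontr a _ _

end PolicyIteration

theorem residual_geometric_decrease_general {n : ℕ} {A : Type*}
    (lam : ℝ) (hlam0 : 0 < lam) (hlam1 : lam < 1)
    (F : A → (Fin n → ℝ) → (Fin n → ℝ))
    (hmono : ∀ σ, Monotone (F σ))
    (hcontr : ∀ σ v w, ‖F σ v - F σ w‖ ≤ lam * ‖v - w‖)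
    (f : (Fin n → ℝ) → (Fin n → ℝ))
    (hle : ∀ v σ, f v ≤ F σ v)
    (hatt : ∀ v, ∃ σ, f v = F σ v)
    (σ : ℕ → A) (V : ℕ → Fin n → ℝ)
    (hfix : ∀ k, F (σ k) (V k) = V k)
    (himp : ∀ k, f (V k) = F (σ (k+1)) (V k))
    (v : Fin n → ℝ) (hv : f v = v)
    (p : ℕ) (hp : p = 1 + Nat.floor (Real.log (1 - lam) / Real.log lam)) :
    lam ^ p / (1 - lam) < 1 ∧
    ∀ k t, k + p ≤ t →
      ‖F (σ t) v - v‖ ≤ (lam ^ p / (1 - lam)) * ‖F (σ k) v - v‖ := by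
  have hgap : 0 < 1 - lam := sub_pos.2 hlam1
  have hpow : lam ^ p < 1 - lam := by
    refine pow_lt_of_log_div_log_lt hlam0 hlam1 hgap ?_
    rw [hp, Nat.cast_add, Nat.cast_one, add_comm]
    exact Nat.lt_floor_add_one _
  refine ⟨(div_lt_one hgap).2 hpow, fun k t hkt => ?_⟩
  obtain ⟨m, rfl⟩ := Nat.exists_eq_add_of_le hkt
  have hdecay : ‖V (k + (p + m)) - v‖ ≤ lam ^ (p + m) * ‖V k - v‖ :=
    le_geom (u := fun j => ‖V (k + j) - v‖) hlam0.le _ fun j _ =>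
      PolicyIteration.norm_value_succ_sub_le hlam0.le hlam1 hmono hcontr hle hatt hfix himp hv _
  have hvV : v ≤ V (k + p + m) :=
    PolicyIteration.le_value hlam0.le hlam1 hmono hcontr hle hv (hfix _)
  calc ‖F (σ (k + p + m)) v - v‖ ≤ ‖V (k + p + m) - v‖ :=
        PolicyIteration.norm_residual_le hmono hle hv (hfix _) hvV
    _ ≤ lam ^ (p + m) * ‖V k - v‖ := by rwa [add_assoc]
    _ ≤ lam ^ p * ‖V k - v‖ := mul_le_mul_of_nonneg_right
        (pow_le_pow_of_le_one hlam0.le hlam1.le (Nat.le_add_right p m)) (norm_nonneg _)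
    _ ≤ lam ^ p * (‖F (σ k) v - v‖ / (1 - lam)) := by
        gcongr
        exact norm_sub_le_of_isFixedPt hlam1 (hcontr _) (hfix k) v
    _ = lam ^ p / (1 - lam) * ‖F (σ k) v - v‖ := by ring

/-- After `p = 1 + ⌊log(1-λ)/log(λ)⌋` iterations of policy
iteration, the sup-norm of the residual decreases by the factor
`μ = λ^p/(1-λ) < 1`. -/
theorem residual_geometric_decrease {n : ℕ} {A : Type*} [Fintype A] [Nonempty A]
    (lam : ℝ) (hlam0 : 0 < lam) (hlam1 : lam < 1)
    (F : A → (Fin n → ℝ) → (Fin n → ℝ))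
    (hmono : ∀ σ, Monotone (F σ))
    (hcontr : ∀ σ v w, ‖F σ v - F σ w‖ ≤ lam * ‖v - w‖)
    (f : (Fin n → ℝ) → (Fin n → ℝ))
    (hle : ∀ v σ, f v ≤ F σ v)
    (hatt : ∀ v, ∃ σ, f v = F σ v)
    (σ : ℕ → A) (V : ℕ → Fin n → ℝ)
    (hfix : ∀ k, F (σ k) (V k) = V k)
    (himp : ∀ k, f (V k) = F (σ (k+1)) (V k))
    (v : Fin n → ℝ) (hv : f v = v)
    (p : ℕ) (hp : p = 1 + Nat.floor (Real.log (1 - lam) / Real.log lam)) :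
    lam ^ p / (1 - lam) < 1 ∧
    ∀ k t, k + p ≤ t →
      ‖F (σ t) v - v‖ ≤ (lam ^ p / (1 - lam)) * ‖F (σ k) v - v‖ :=
  residual_geometric_decrease_general lam hlam0 hlam1 F hmono hcontr f hle hatt σ V hfix himp v hv p
    hp
end

section
/- The policy iteration algorithm for a game with n states, m₁ total state-action pairs of the first player, and all maps f^(σ) order-preserving λ-contractions (λ < 1 fixed), terminates after at most (m₁ − n)·(1 + ⌊log(1−λ)/log(λ)⌋) iterations. -/
/-!
Let `v⋆` be the fixed point of the Bellman operator `f`. Monotonicity and contraction make the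
values `V k` decrease to `v⋆` with `dist (V k) v⋆` shrinking by a factor `λ` per step. If state `i`
realises the gap `dist (V k) v⋆` at time `k`, then using the action `σ k i` at `i` at any later
time `t` keeps `V t i - v⋆ i ≥ (1 - λ) dist (V k) v⋆`, which is impossible once
`λ ^ (t - k) < 1 - λ`, i.e. after `N = 1 + ⌊log (1 - λ) / log λ⌋` steps. So every block of `N`
iterations before reaching `v⋆` discards a state-action pair for good; the `n` pairs still in use
are never discarded, so at most `m₁ - n` blocks can pass before `V k = v⋆`, and then the
conservative choice stops the iteration.
-/

open Function
open scoped NNReal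

namespace ContractingWith

variable {α : Type*} [MetricSpace α] [CompleteSpace α] [PartialOrder α] [OrderClosedTopology α]
  {K : ℝ≥0} {g : α → α} {x u : α}

theorem le_of_le_map (hg : ContractingWith K g) (hm : Monotone g) (hx : IsFixedPt g x)
    (hu : u ≤ g u) : u ≤ x := by
  have : Nonempty α := ⟨x⟩
  rw [hg.fixedPoint_unique hx]
  exact (hm.monotone_iterate_of_le_map hu).ge_of_tendsto (hg.tendsto_iterate_fixedPoint u) 0

theorem le_of_map_le (hg : ContractingWith K g) (hm : Monotone g) (hx : IsFixedPt g x)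
    (hu : g u ≤ u) : x ≤ u := by
  have : Nonempty α := ⟨x⟩
  rw [hg.fixedPoint_unique hx]
  exact (hm.antitone_iterate_of_map_le hu).le_of_tendsto (hg.tendsto_iterate_fixedPoint u) 0

theorem le_map_of_map_le (hg : ContractingWith K g) (hm : Monotone g) (hx : IsFixedPt g x)
    (hu : g u ≤ u) : x ≤ g u :=
  hx ▸ hm (hg.le_of_map_le hm hx hu)

end ContractingWith

theorem LipschitzWith.of_le_of_exists_eq {α ι : Type*} [PseudoMetricSpace α] {K : ℝ≥0}
    {F : ι → α → ℝ} (hF : ∀ a, LipschitzWith K (F a)) {g : α → ℝ} (hle : ∀ x a, g x ≤ F a x)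
    (hatt : ∀ x, ∃ a, g x = F a x) : LipschitzWith K g :=
  LipschitzWith.of_le_add_mul K fun x y => by
    obtain ⟨a, ha⟩ := hatt y
    exact ha ▸ (hle x a).trans ((hF a).le_add_mul x y)

theorem pow_one_add_floor_log_div_log_lt {lam ε : ℝ} (h0 : 0 < lam) (h1 : lam < 1) (hε : 0 < ε) :
    lam ^ (1 + ⌊Real.log ε / Real.log lam⌋₊) < ε := by
  have hlog : Real.log lam ≠ 0 := (Real.log_neg h0 h1).ne
  have hexp : lam ^ (Real.log ε / Real.log lam) = ε := by
    rw [Real.rpow_def_of_pos h0, mul_div_cancel₀ _ hlog, Real.exp_log hε]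
  calc lam ^ (1 + ⌊Real.log ε / Real.log lam⌋₊)
      = lam ^ ((1 + ⌊Real.log ε / Real.log lam⌋₊ : ℕ) : ℝ) := (Real.rpow_natCast _ _).symm
    _ < lam ^ (Real.log ε / Real.log lam) := by
      refine Real.rpow_lt_rpow_of_exponent_gt h0 h1 ?_
      push_cast
      linarith [Nat.lt_floor_add_one (Real.log ε / Real.log lam)]
    _ = ε := hexp

theorem add_card_le_sum_card_of_forall_exists_ne {ι : Type*} [Fintype ι] {A : ι → Type*}
    [∀ i, Fintype (A i)] {σ : ℕ → ∀ i, A i} {τ : ℕ → ℕ} (hτ : Monotone τ) {m : ℕ}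
    (h : ∀ j < m, ∃ i, ∀ t, τ (j + 1) ≤ t → σ t i ≠ σ (τ j) i) :
    m + Fintype.card ι ≤ ∑ i, Fintype.card (A i) := by
  choose s hs using h
  let discarded : Fin m → Σ i, A i := fun j => ⟨s j j.2, σ (τ j) (s j j.2)⟩
  let current : ι → Σ i, A i := fun i => ⟨i, σ (τ m) i⟩
  have hnot_used : ∀ (j : Fin m) t, τ (j + 1) ≤ t → ∀ i, ⟨i, σ t i⟩ ≠ discarded j := by
    intro j t ht i heq
    obtain ⟨rfl, heq⟩ := Sigma.mk.inj_iff.mp heq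
    exact hs j j.2 t ht (eq_of_heq heq)
  have hinj : Injective (Sum.elim discarded current) := by
    refine Injective.sumElim (fun j j' heq => ?_) (fun i i' heq => congrArg Sigma.fst heq)
      (fun j i => (hnot_used j _ (hτ (by omega)) i).symm)
    by_contra hne
    rcases Fin.lt_or_lt_of_ne hne with hlt | hlt
    · exact hnot_used j _ (hτ hlt) _ heq.symm
    · exact hnot_used j' _ (hτ hlt) _ heq
  simpa using Fintype.card_le_of_injective _ hinj

section PolicyIteration

variable {ι : Type*} {A : ι → Type*}

def policyMap (F : ∀ i, (ι → ℝ) → A i → ℝ) (σ : ∀ i, A i) (v : ι → ℝ) : ι → ℝ :=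
  fun i => F i v (σ i)

variable [Fintype ι]

structure IsPolicyIteration (F : ∀ i, (ι → ℝ) → A i → ℝ) (K : ℝ≥0) (f : (ι → ℝ) → ι → ℝ)
    (σ : ℕ → ∀ i, A i) (V : ℕ → ι → ℝ) : Prop where
  monotone_policyMap : ∀ τ, Monotone (policyMap F τ)
  contractingWith_policyMap : ∀ τ, ContractingWith K (policyMap F τ)
  map_le : ∀ v i a, f v i ≤ F i v a
  exists_map_eq : ∀ v i, ∃ a, f v i = F i v a
  isFixedPt : ∀ k, IsFixedPt (policyMap F (σ k)) (V k)
  map_eq_policyMap_succ : ∀ k, f (V k) = policyMap F (σ (k + 1)) (V k)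
  conservative : ∀ k i, f (V k) i = F i (V k) (σ k i) → σ (k + 1) i = σ k i

namespace IsPolicyIteration

variable {F : ∀ i, (ι → ℝ) → A i → ℝ} {K : ℝ≥0} {f : (ι → ℝ) → ι → ℝ} {σ : ℕ → ∀ i, A i}
  {V : ℕ → ι → ℝ} {vOpt : ι → ℝ}

theorem value_eq (h : IsPolicyIteration F K f σ V) (k : ℕ) (i : ι) : F i (V k) (σ k i) = V k i :=
  congrFun (h.isFixedPt k) i

theorem monotone_apply (h : IsPolicyIteration F K f σ V) (i : ι) (a : A i) :
    Monotone (F i · a) := fun v w hvw => by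
  classical
  simpa [policyMap] using h.monotone_policyMap (update (σ 0) i a) hvw i

theorem lipschitzWith_apply (h : IsPolicyIteration F K f σ V) (i : ι) (a : A i) :
    LipschitzWith K (F i · a) := by
  classical
  simpa [policyMap, comp_def] using
    (LipschitzWith.eval i).comp (h.contractingWith_policyMap (update (σ 0) i a)).2

theorem contractingWith (h : IsPolicyIteration F K f σ V) : ContractingWith K f := by
  refine ⟨(h.contractingWith_policyMap (σ 0)).1, LipschitzWith.of_dist_le_mul fun v w => ?_⟩
  refine (dist_pi_le_iff (by positivity)).2 fun i => ?_
  exact (LipschitzWith.of_le_of_exists_eq (h.lipschitzWith_apply i) (h.map_le · i)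
    (h.exists_map_eq · i)).dist_le_mul v w

theorem le_value (h : IsPolicyIteration F K f σ V) (hv : IsFixedPt f vOpt) (k : ℕ) :
    vOpt ≤ V k :=
  (h.contractingWith_policyMap _).le_of_le_map (h.monotone_policyMap _) (h.isFixedPt k)
    fun i => (congrFun hv.eq i).symm.trans_le (h.map_le vOpt i (σ k i))

theorem map_value_le (h : IsPolicyIteration F K f σ V) (k : ℕ) : f (V k) ≤ V k :=
  fun i => (h.map_le _ i _).trans_eq (h.value_eq k i)

theorem value_succ_le_map (h : IsPolicyIteration F K f σ V) (k : ℕ) : V (k + 1) ≤ f (V k) := by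
  have hdesc : policyMap F (σ (k + 1)) (V k) ≤ V k := h.map_eq_policyMap_succ k ▸ h.map_value_le k
  rw [h.map_eq_policyMap_succ k]
  exact (h.contractingWith_policyMap _).le_map_of_map_le (h.monotone_policyMap _) (h.isFixedPt _)
    hdesc

theorem dist_value_succ_le (h : IsPolicyIteration F K f σ V) (hv : IsFixedPt f vOpt) (k : ℕ) :
    dist (V (k + 1)) vOpt ≤ K * dist (V k) vOpt := by
  refine (dist_pi_le_iff (by positivity)).2 fun i => ?_
  calc dist (V (k + 1) i) (vOpt i) = V (k + 1) i - vOpt i := by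
        rw [Real.dist_eq, abs_of_nonneg (sub_nonneg.2 (h.le_value hv _ i))]
    _ ≤ f (V k) i - f vOpt i := by
        rw [hv.eq]
        exact sub_le_sub_right (h.value_succ_le_map k i) _
    _ ≤ dist (f (V k)) (f vOpt) := (Real.sub_le_dist _ _).trans (dist_le_pi_dist _ _ i)
    _ ≤ K * dist (V k) vOpt := h.contractingWith.2.dist_le_mul _ _

theorem dist_value_add_le (h : IsPolicyIteration F K f σ V) (hv : IsFixedPt f vOpt) (k m : ℕ) :
    dist (V (k + m)) vOpt ≤ K ^ m * dist (V k) vOpt :=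
  le_geom (u := fun m => dist (V (k + m)) vOpt) K.2 m fun j _ => h.dist_value_succ_le hv (k + j)

theorem sub_dist_le_value_of_eq (h : IsPolicyIteration F K f σ V) (hv : IsFixedPt f vOpt)
    {k t : ℕ} {i : ι} (hσ : σ t i = σ k i) :
    V k i - K * dist (V k) vOpt ≤ V t i := by
  have hlip : V k i ≤ F i vOpt (σ k i) + K * dist (V k) vOpt :=
    h.value_eq k i ▸ (h.lipschitzWith_apply i _).le_add_mul _ _
  have hmono : F i vOpt (σ k i) ≤ V t i :=
    h.value_eq t i ▸ hσ ▸ h.monotone_apply i _ (h.le_value hv t)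
  linarith

theorem exists_forall_ne (h : IsPolicyIteration F K f σ V) (hv : IsFixedPt f vOpt) {N : ℕ}
    (hN : (K : ℝ) ^ N < 1 - K) {k : ℕ} (hk : 0 < dist (V k) vOpt) :
    ∃ i, ∀ t, k + N ≤ t → σ t i ≠ σ k i := by
  obtain ⟨i, hi⟩ := ((dist_pi_eq_iff hk).1 rfl).1
  rw [Real.dist_eq, abs_of_nonneg (sub_nonneg.2 (h.le_value hv k i))] at hi
  refine ⟨i, fun t ht hσ => ?_⟩
  have hlow := h.sub_dist_le_value_of_eq hv hσ
  have hup : V t i - vOpt i ≤ K ^ N * dist (V k) vOpt :=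
    calc V t i - vOpt i ≤ dist (V t) vOpt :=
          (Real.sub_le_dist _ _).trans (dist_le_pi_dist (V t) vOpt i)
      _ ≤ K ^ (t - k) * dist (V k) vOpt := by
          simpa [Nat.add_sub_cancel' (by omega : k ≤ t)] using h.dist_value_add_le hv k (t - k)
      _ ≤ K ^ N * dist (V k) vOpt := mul_le_mul_of_nonneg_right
          (pow_le_pow_of_le_one K.2 (NNReal.coe_le_one.2 h.contractingWith.1.le) (by omega))
          dist_nonneg
  linarith [mul_lt_mul_of_pos_right hN hk]

theorem succ_eq_of_value_eq (h : IsPolicyIteration F K f σ V) (hv : IsFixedPt f vOpt) {k : ℕ}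
    (hk : V k = vOpt) : σ (k + 1) = σ k :=
  funext fun i => h.conservative k i <| by rw [h.value_eq, hk, hv.eq]

theorem exists_succ_eq_le [∀ i, Fintype (A i)] (h : IsPolicyIteration F K f σ V) {N : ℕ}
    (hN : (K : ℝ) ^ N < 1 - K) :
    ∃ k ≤ (∑ i, Fintype.card (A i) - Fintype.card ι) * N, σ (k + 1) = σ k := by
  obtain ⟨vOpt, hv⟩ : ∃ v, IsFixedPt f v := ⟨_, h.contractingWith.fixedPoint_isFixedPt⟩
  obtain ⟨j, hj, hzero⟩ :
      ∃ j ≤ ∑ i, Fintype.card (A i) - Fintype.card ι, dist (V (j * N)) vOpt = 0 := by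
    by_contra! hpos
    have := add_card_le_sum_card_of_forall_exists_ne (σ := σ) (τ := (· * N))
      (fun _ _ hab => Nat.mul_le_mul_right N hab)
      (m := ∑ i, Fintype.card (A i) - Fintype.card ι + 1) fun j hj =>
        (h.exists_forall_ne hv hN (dist_nonneg.lt_of_ne' (hpos j (by omega)))).imp
          fun i hi t ht => hi t (by rwa [add_one_mul] at ht)
    omega
  exact ⟨j * N, Nat.mul_le_mul_right N hj, h.succ_eq_of_value_eq hv (dist_eq_zero.1 hzero)⟩

end IsPolicyIteration

end PolicyIteration

theorem policy_iteration_strongly_polynomial_general {n : ℕ} (A : Fin n → Type*)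
    [∀ i, Fintype (A i)]
    (lam : ℝ) (hlam0 : 0 < lam) (hlam1 : lam < 1)
    (Fm : ∀ i : Fin n, (Fin n → ℝ) → A i → ℝ)
    (Fσ : (∀ i, A i) → (Fin n → ℝ) → (Fin n → ℝ))
    (hFσ : ∀ σ v i, Fσ σ v i = Fm i v (σ i))
    (hmono : ∀ σ, Monotone (Fσ σ))
    (hcontr : ∀ σ v w, ‖Fσ σ v - Fσ σ w‖ ≤ lam * ‖v - w‖)
    (f : (Fin n → ℝ) → (Fin n → ℝ))
    (hle : ∀ v (i : Fin n) (a : A i), f v i ≤ Fm i v a)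
    (hatt : ∀ v i, ∃ a : A i, f v i = Fm i v a)
    (σ : ℕ → ∀ i, A i) (V : ℕ → Fin n → ℝ)
    (hfix : ∀ k, Fσ (σ k) (V k) = V k)
    (himp : ∀ k, f (V k) = Fσ (σ (k+1)) (V k))
    (hcons : ∀ k i, f (V k) i = Fm i (V k) (σ k i) → σ (k+1) i = σ k i) :
    ∃ k ≤ ((∑ i, Fintype.card (A i)) - n) *
        (1 + Nat.floor (Real.log (1 - lam) / Real.log lam)),
      σ (k+1) = σ k := by
  obtain rfl : Fσ = policyMap Fm := funext₃ hFσ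
  let K : ℝ≥0 := ⟨lam, hlam0.le⟩
  have hK : ∀ τ, ContractingWith K (policyMap Fm τ) := fun τ =>
    ⟨NNReal.coe_lt_one.1 hlam1, LipschitzWith.of_dist_le_mul fun v w => by
      rw [dist_eq_norm, dist_eq_norm]
      exact hcontr τ v w⟩
  have hrun : IsPolicyIteration Fm K f σ V := ⟨hmono, hK, hle, hatt, hfix, himp, hcons⟩
  have := hrun.exists_succ_eq_le (pow_one_add_floor_log_div_log_lt hlam0 hlam1 (sub_pos.2 hlam1))
  rwa [Fintype.card_fin] at this

/-- Theorem `hansen-improved`: policy iteration with per-state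
action sets `A i`, maps `f^(σ) v i = Fm i v (σ i)` that are order-preserving
sup-norm `λ`-contractions, `f v i = min_{a ∈ A i} Fm i v a`, and conservative
policy improvement, triggers its stopping condition `σ_{k+1} = σ_k` after at
most `(m₁ - n)(1 + ⌊log(1-λ)/log λ⌋)` iterations, where `m₁ = Σ_i |A i|`. -/
theorem policy_iteration_strongly_polynomial {n : ℕ} (A : Fin n → Type*)
    [∀ i, Fintype (A i)] [∀ i, Nonempty (A i)]
    (lam : ℝ) (hlam0 : 0 < lam) (hlam1 : lam < 1)
    (Fm : ∀ i : Fin n, (Fin n → ℝ) → A i → ℝ)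
    (Fσ : (∀ i, A i) → (Fin n → ℝ) → (Fin n → ℝ))
    (hFσ : ∀ σ v i, Fσ σ v i = Fm i v (σ i))
    (hmono : ∀ σ, Monotone (Fσ σ))
    (hcontr : ∀ σ v w, ‖Fσ σ v - Fσ σ w‖ ≤ lam * ‖v - w‖)
    (f : (Fin n → ℝ) → (Fin n → ℝ))
    (hle : ∀ v (i : Fin n) (a : A i), f v i ≤ Fm i v a)
    (hatt : ∀ v i, ∃ a : A i, f v i = Fm i v a)
    (σ : ℕ → ∀ i, A i) (V : ℕ → Fin n → ℝ)
    (hfix : ∀ k, Fσ (σ k) (V k) = V k)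
    (himp : ∀ k, f (V k) = Fσ (σ (k+1)) (V k))
    (hcons : ∀ k i, f (V k) i = Fm i (V k) (σ k i) → σ (k+1) i = σ k i) :
    ∃ k ≤ ((∑ i, Fintype.card (A i)) - n) *
        (1 + Nat.floor (Real.log (1 - lam) / Real.log lam)),
      σ (k+1) = σ k :=
  policy_iteration_strongly_polynomial_general A lam hlam0 hlam1 Fm Fσ hFσ hmono hcontr f hle hatt σ
    V hfix himp hcons
end

section
/- For a continuous, positively homogeneous, order-preserving self-map h of the nonnegative orthant ℝ₊ⁿ, the cone eigenvalue spectral radius equals the Collatz–Wielandt number: sup{λ ≥ 0 : ∃ v ∈ ℝ₊ⁿ \ {0}, h(v) = λv} = inf{λ > 0 : ∃ v with all coordinates strictly positive, h(v) ≤ λv}. -/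
/-!
An eigenvalue `λ` with eigenvector `v ≥ 0, v ≠ 0` is at most any `μ` with `h u ≤ μ • u`, `u > 0`:
compare `v` with the least multiple `c • u` dominating it and evaluate at a coordinate where
`v` and `c • u` touch.

Conversely, perturb `h` to `f v = h v + ε (∑ v) 𝟙`. Its logarithmic conjugate
`x ↦ log (f (exp x))` is monotone and commutes with adding constants, hence nonexpansive for the
oscillation seminorm `max - min`, and its oscillation is bounded. Iterating the contraction
`θ • g` with `θ` close to `1` yields approximate fixed points modulo constants, i.e. positive
approximate eigenvectors of `f`, whose approximate eigenvalues lie above the Collatz–Wielandt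
number. As `ε → 0`, compactness of the simplex and continuity of `h` give a nonnegative
eigenvector whose eigenvalue is at least the Collatz–Wielandt number.
-/

open Filter Topology

namespace CollatzWielandt

variable {ι : Type*}

noncomputable def osc (z : ι → ℝ) : ℝ := (⨆ i, z i) - ⨅ i, z i

lemma osc_le_of_forall_mem_Icc [Nonempty ι] {z : ι → ℝ} {a b : ℝ}
    (hz : ∀ i, z i ∈ Set.Icc a b) : osc z ≤ b - a :=
  sub_le_sub (ciSup_le fun i => (hz i).2) (le_ciInf fun i => (hz i).1)

lemma mem_Icc_of_osc_le [Finite ι] {z : ι → ℝ} {c : ℝ} (hz : osc z ≤ c) (i : ι) :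
    z i ∈ Set.Icc (⨅ j, z j) ((⨅ j, z j) + c) := by
  have := le_ciSup (Finite.bddAbove_range z) i
  exact ⟨ciInf_le (Finite.bddBelow_range z) i, by unfold osc at hz; linarith⟩

lemma osc_nonneg [Finite ι] [Nonempty ι] (z : ι → ℝ) : 0 ≤ osc z :=
  sub_nonneg.2 (ciInf_le_ciSup (Finite.bddBelow_range z) (Finite.bddAbove_range z))

lemma osc_smul {t : ℝ} (ht : 0 ≤ t) (z : ι → ℝ) : osc (t • z) = t * osc z := by
  simp only [osc, Pi.smul_apply, smul_eq_mul, mul_sub, Real.mul_iSup_of_nonneg ht,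
    Real.mul_iInf_of_nonneg ht]

lemma osc_add_le [Finite ι] [Nonempty ι] (y z : ι → ℝ) : osc (y + z) ≤ osc y + osc z := by
  have := osc_le_of_forall_mem_Icc (z := y + z) fun i =>
    ⟨add_le_add (mem_Icc_of_osc_le le_rfl i).1 (mem_Icc_of_osc_le le_rfl i).1,
      add_le_add (mem_Icc_of_osc_le le_rfl i).2 (mem_Icc_of_osc_le le_rfl i).2⟩
  linarith

lemma osc_iterate_succ_sub_le {F : (ι → ℝ) → ι → ℝ} {θ : ℝ}
    (hF : ∀ x y, osc (F x - F y) ≤ θ * osc (x - y)) (hθ : 0 ≤ θ) (x : ι → ℝ) (m : ℕ) :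
    osc (F^[m + 1] x - F^[m] x) ≤ θ ^ m * osc (F x - x) := by
  induction m with
  | zero => simp
  | succ m ih =>
    calc osc (F^[m + 2] x - F^[m + 1] x)
        = osc (F (F^[m + 1] x) - F (F^[m] x)) := by
          rw [Function.iterate_succ_apply' F (m + 1), Function.iterate_succ_apply']
      _ ≤ θ * osc (F^[m + 1] x - F^[m] x) := hF _ _
      _ ≤ θ * (θ ^ m * osc (F x - x)) := mul_le_mul_of_nonneg_left ih hθ
      _ = θ ^ (m + 1) * osc (F x - x) := by ring

structure IsTopical (g : (ι → ℝ) → ι → ℝ) : Prop where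
  monotone : Monotone g
  add_const : ∀ (c : ℝ) (x : ι → ℝ), g (x + fun _ => c) = g x + fun _ => c

namespace IsTopical

variable {g : (ι → ℝ) → ι → ℝ}

lemma sub_mem_Icc (hg : IsTopical g) {x y : ι → ℝ} {a b : ℝ}
    (hxy : ∀ i, x i - y i ∈ Set.Icc a b) (i : ι) : g x i - g y i ∈ Set.Icc a b := by
  have hlo : g (y + fun _ => a) ≤ g x :=
    hg.monotone fun j => show y j + a ≤ x j by linarith [(hxy j).1]
  have hup : g x ≤ g (y + fun _ => b) :=
    hg.monotone fun j => show x j ≤ y j + b by linarith [(hxy j).2]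
  rw [hg.add_const] at hlo hup
  have hlo_i : g y i + a ≤ g x i := hlo i
  have hup_i : g x i ≤ g y i + b := hup i
  exact ⟨by linarith, by linarith⟩

lemma osc_sub_le [Finite ι] [Nonempty ι] (hg : IsTopical g) (x y : ι → ℝ) :
    osc (g x - g y) ≤ osc (x - y) := by
  have := osc_le_of_forall_mem_Icc (z := g x - g y)
    (hg.sub_mem_Icc (mem_Icc_of_osc_le (z := x - y) le_rfl))
  rwa [add_sub_cancel_left] at this

lemma exists_osc_sub_le [Finite ι] [Nonempty ι] (hg : IsTopical g) {D : ℝ}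
    (hD : ∀ x, osc (g x) ≤ D) {δ : ℝ} (hδ : 0 < δ) : ∃ x, osc (g x - x) ≤ δ := by
  have hD0 : 0 ≤ D := (osc_nonneg _).trans (hD 0)
  set θ := D / (D + δ / 2)
  have hθ0 : 0 ≤ θ := by positivity
  have hθ1 : θ < 1 := (div_lt_one (by positivity)).2 (by linarith)
  have hres : (1 - θ) * D ≤ δ / 2 := by
    have : (1 - θ) * D = δ / 2 * θ := by simp only [θ]; field_simp; ring
    rw [this]; nlinarith
  set F : (ι → ℝ) → ι → ℝ := fun x => θ • g x
  have hF : ∀ x y, osc (F x - F y) ≤ θ * osc (x - y) := fun x y => by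
    rw [← smul_sub, osc_smul hθ0]
    exact mul_le_mul_of_nonneg_left (hg.osc_sub_le x y) hθ0
  obtain ⟨m, hm⟩ : ∃ m, θ ^ m * osc (F 0 - 0) ≤ δ / 2 :=
    (((tendsto_pow_atTop_nhds_zero_of_lt_one hθ0 hθ1).mul_const _).eventually
      (ge_mem_nhds (by simpa using half_pos hδ))).exists
  refine ⟨F^[m] 0, ?_⟩
  have hsplit : g (F^[m] 0) - F^[m] 0 = (1 - θ) • g (F^[m] 0) + (F^[m + 1] 0 - F^[m] 0) := by
    rw [Function.iterate_succ_apply']; simp only [F]; module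
  calc osc (g (F^[m] 0) - F^[m] 0)
      ≤ osc ((1 - θ) • g (F^[m] 0)) + osc (F^[m + 1] 0 - F^[m] 0) := hsplit ▸ osc_add_le _ _
    _ ≤ (1 - θ) * D + θ ^ m * osc (F 0 - 0) := by
      rw [osc_smul (by linarith)]
      exact add_le_add (mul_le_mul_of_nonneg_left (hD _) (by linarith))
        (osc_iterate_succ_sub_le hF hθ0 0 m)
    _ ≤ δ := by linarith

end IsTopical

noncomputable def logConj (f : (ι → ℝ) → ι → ℝ) (x : ι → ℝ) : ι → ℝ :=
  fun i => Real.log (f (Real.exp ∘ x) i)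

section PositiveOrthant

variable {f : (ι → ℝ) → ι → ℝ}

lemma isTopical_logConj (hmono : ∀ v w : ι → ℝ, (∀ i, 0 < v i) → v ≤ w → f v ≤ f w)
    (hhom : ∀ t : ℝ, 0 < t → ∀ v : ι → ℝ, (∀ i, 0 < v i) → f (t • v) = t • f v)
    (hpos : ∀ v : ι → ℝ, (∀ i, 0 < v i) → ∀ i, 0 < f v i) : IsTopical (logConj f) where
  monotone x y hxy i :=
    Real.log_le_log (hpos _ (fun j => Real.exp_pos _) i)
      (hmono _ _ (fun j => Real.exp_pos _) (fun j => Real.exp_le_exp.2 (hxy j)) i)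
  add_const c x := by
    have hexp : Real.exp ∘ (x + fun _ => c) = Real.exp c • (Real.exp ∘ x) := by
      ext j; simp [Real.exp_add, mul_comm]
    ext i
    simp only [logConj, hexp, Pi.add_apply]
    have hx : ∀ j, 0 < (Real.exp ∘ x) j := fun j => Real.exp_pos (x j)
    rw [hhom _ (Real.exp_pos c) _ hx, Pi.smul_apply, smul_eq_mul,
      Real.log_mul (Real.exp_pos c).ne' (hpos _ hx i).ne', Real.log_exp, add_comm]

variable [Fintype ι] {a b : ℝ}

lemma osc_logConj_le [Nonempty ι] (ha : 0 < a) (hbound : ∀ v : ι → ℝ, (∀ i, 0 < v i) →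
      ∀ i, f v i ∈ Set.Icc (a * ∑ j, v j) (b * ∑ j, v j)) (x : ι → ℝ) :
    osc (logConj f x) ≤ Real.log b - Real.log a := by
  set S := ∑ j, Real.exp (x j)
  have hS : 0 < S := Finset.sum_pos (fun j _ => Real.exp_pos _) Finset.univ_nonempty
  have hfx := hbound (Real.exp ∘ x) (fun j => Real.exp_pos _)
  have hb : 0 < b := by
    obtain ⟨i⟩ := ‹Nonempty ι›
    exact pos_of_mul_pos_left (((mul_pos ha hS).trans_le (hfx i).1).trans_le (hfx i).2) hS.le
  have := osc_le_of_forall_mem_Icc (z := logConj f x) (a := Real.log a + Real.log S)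
    (b := Real.log b + Real.log S) fun i => by
      rw [← Real.log_mul ha.ne' hS.ne', ← Real.log_mul hb.ne' hS.ne']
      exact ⟨Real.log_le_log (mul_pos ha hS) (hfx i).1,
        Real.log_le_log ((mul_pos ha hS).trans_le (hfx i).1) (hfx i).2⟩
  linarith

lemma exists_pos_approx_eigenvector_of_bounds [Nonempty ι]
    (hmono : ∀ v w : ι → ℝ, (∀ i, 0 < v i) → v ≤ w → f v ≤ f w)
    (hhom : ∀ t : ℝ, 0 < t → ∀ v : ι → ℝ, (∀ i, 0 < v i) → f (t • v) = t • f v)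
    (ha : 0 < a) (hbound : ∀ v : ι → ℝ, (∀ i, 0 < v i) →
      ∀ i, f v i ∈ Set.Icc (a * ∑ j, v j) (b * ∑ j, v j)) {δ : ℝ} (hδ : 0 < δ) :
    ∃ v ∈ stdSimplex ℝ ι, (∀ i, 0 < v i) ∧
      ∃ s : ℝ, 0 < s ∧ s • v ≤ f v ∧ f v ≤ (Real.exp δ * s) • v := by
  have hpos : ∀ v : ι → ℝ, (∀ i, 0 < v i) → ∀ i, 0 < f v i := fun v hv i =>
    (mul_pos ha (Finset.sum_pos (fun j _ => hv j) Finset.univ_nonempty)).trans_le (hbound v hv i).1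
  obtain ⟨x, hx⟩ :=
    (isTopical_logConj hmono hhom hpos).exists_osc_sub_le (osc_logConj_le ha hbound) hδ
  set w := Real.exp ∘ x
  have hw : ∀ i, 0 < w i := fun i => Real.exp_pos (x i)
  set μ := ⨅ j, (logConj f x - x) j
  have hμ : ∀ i, logConj f x i - x i ∈ Set.Icc μ (μ + δ) := mem_Icc_of_osc_le hx
  have hfw : Real.exp μ • w ≤ f w ∧ f w ≤ (Real.exp δ * Real.exp μ) • w := by
    have hexp : ∀ i, f w i = Real.exp (logConj f x i - x i) * w i := fun i => by
      simp only [logConj, w, Function.comp_apply, Real.exp_sub, Real.exp_log (hpos w hw i),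
        div_mul_cancel₀ _ (Real.exp_pos (x i)).ne']
    refine ⟨fun i => ?_, fun i => ?_⟩ <;>
      simp only [Pi.smul_apply, smul_eq_mul, hexp i, ← Real.exp_add] <;>
      gcongr <;> linarith [(hμ i).1, (hμ i).2, hw i]
  set S := ∑ j, w j
  have hS : 0 < S := Finset.sum_pos (fun j _ => hw j) Finset.univ_nonempty
  have hfv : f (S⁻¹ • w) = S⁻¹ • f w := hhom _ (inv_pos.2 hS) w hw
  refine ⟨S⁻¹ • w, ⟨fun i => (mul_pos (inv_pos.2 hS) (hw i)).le, ?_⟩,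
    fun i => mul_pos (inv_pos.2 hS) (hw i), Real.exp μ, Real.exp_pos μ, ?_, ?_⟩
  · simp only [Pi.smul_apply, smul_eq_mul, ← Finset.mul_sum, S, inv_mul_cancel₀ hS.ne']
  · rw [hfv, smul_comm]; exact smul_le_smul_of_nonneg_left hfw.1 (inv_pos.2 hS).le
  · rw [hfv, smul_comm _ S⁻¹]; exact smul_le_smul_of_nonneg_left hfw.2 (inv_pos.2 hS).le

end PositiveOrthant

section OrderPreserving

variable [Fintype ι] {h : (ι → ℝ) → ι → ℝ}

lemma map_le_sum_smul_map_one [Nonempty ι]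
    (hhom : ∀ t : ℝ, 0 < t → ∀ v : ι → ℝ, 0 ≤ v → h (t • v) = t • h v)
    (hmono : ∀ v w : ι → ℝ, 0 ≤ v → v ≤ w → h v ≤ h w) {v : ι → ℝ} (hv : ∀ i, 0 < v i) :
    h v ≤ (∑ j, v j) • h 1 :=
  calc h v ≤ h ((∑ j, v j) • 1) := hmono _ _ (fun i => (hv i).le) fun i => by
        simpa using Finset.single_le_sum (fun k _ => (hv k).le) (Finset.mem_univ i)
    _ = (∑ j, v j) • h 1 :=
        hhom _ (Finset.sum_pos (fun j _ => hv j) Finset.univ_nonempty) 1 zero_le_one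

lemma exists_pos_approx_eigenvector [Nonempty ι] (hmap : ∀ v : ι → ℝ, 0 ≤ v → 0 ≤ h v)
    (hhom : ∀ t : ℝ, 0 < t → ∀ v : ι → ℝ, 0 ≤ v → h (t • v) = t • h v)
    (hmono : ∀ v w : ι → ℝ, 0 ≤ v → v ≤ w → h v ≤ h w) {ε : ℝ} (hε : 0 < ε) :
    ∃ u ∈ stdSimplex ℝ ι, (∀ i, 0 < u i) ∧
      ∃ t : ℝ, 0 < t ∧ h u ≤ t • u ∧ t • u ≤ Real.exp ε • (h u + fun _ => ε) := by
  set f : (ι → ℝ) → ι → ℝ := fun v => h v + fun _ => ε * ∑ j, v j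
  have hfmono : ∀ v w : ι → ℝ, (∀ i, 0 < v i) → v ≤ w → f v ≤ f w := fun v w hv hvw =>
    add_le_add (hmono v w (fun i => (hv i).le) hvw) fun _ =>
      mul_le_mul_of_nonneg_left (Finset.sum_le_sum fun j _ => hvw j) hε.le
  have hfhom : ∀ t : ℝ, 0 < t → ∀ v : ι → ℝ, (∀ i, 0 < v i) → f (t • v) = t • f v :=
    fun t ht v hv => by
      ext i
      simp only [f, hhom t ht v (fun i => (hv i).le), Pi.add_apply, Pi.smul_apply, smul_eq_mul,
        ← Finset.mul_sum]
      ring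
  have hfbound : ∀ v : ι → ℝ, (∀ i, 0 < v i) →
      ∀ i, f v i ∈ Set.Icc (ε * ∑ j, v j) ((∑ j, h 1 j + ε) * ∑ j, v j) := fun v hv i => by
    have hh1 : h 1 i ≤ ∑ j, h 1 j :=
      Finset.single_le_sum (fun j _ => hmap 1 zero_le_one j) (Finset.mem_univ i)
    have hvi : h v i ≤ (∑ j, v j) * h 1 i := map_le_sum_smul_map_one hhom hmono hv i
    have hS : 0 ≤ ∑ j, v j := Finset.sum_nonneg fun j _ => (hv j).le
    have hv0 : 0 ≤ h v i := hmap v (fun j => (hv j).le) i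
    show h v i + ε * ∑ j, v j ∈ _
    constructor <;> nlinarith
  obtain ⟨u, hu, hupos, s, hs, hlow, hup⟩ :=
    exists_pos_approx_eigenvector_of_bounds hfmono hfhom hε hfbound hε
  have hfu : f u = h u + fun _ => ε := by simp only [f, hu.2, mul_one]
  rw [hfu] at hlow hup
  refine ⟨u, hu, hupos, Real.exp ε * s, by positivity, ?_, ?_⟩
  · exact (le_add_of_nonneg_right fun _ => hε.le).trans hup
  · rw [mul_smul]; exact smul_le_smul_of_nonneg_left hlow (Real.exp_pos ε).le

lemma eigenvalue_le_of_map_le_smul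
    (hhom : ∀ t : ℝ, 0 < t → ∀ v : ι → ℝ, 0 ≤ v → h (t • v) = t • h v)
    (hmono : ∀ v w : ι → ℝ, 0 ≤ v → v ≤ w → h v ≤ h w) {v u : ι → ℝ} {lam mu : ℝ}
    (hv0 : 0 ≤ v) (hv : v ≠ 0) (hev : h v = lam • v) (hu : ∀ i, 0 < u i) (hcw : h u ≤ mu • u) :
    lam ≤ mu := by
  obtain ⟨j, hj⟩ := Function.ne_iff.1 hv
  obtain ⟨i, -, hi⟩ := Finset.univ.exists_max_image (fun i => v i / u i) ⟨j, Finset.mem_univ j⟩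
  set c := v i / u i
  have hvc : v ≤ c • u := fun k => (div_le_iff₀ (hu k)).1 (hi k (Finset.mem_univ k))
  have hc : 0 < c :=
    (div_pos ((hv0 j).lt_of_ne (Ne.symm hj)) (hu j)).trans_le (hi j (Finset.mem_univ j))
  have hvi : v i = c * u i := (div_mul_cancel₀ _ (hu i).ne').symm
  have hle : lam • v ≤ (c * mu) • u :=
    calc lam • v = h v := hev.symm
      _ ≤ h (c • u) := hmono _ _ hv0 hvc
      _ = c • h u := hhom c hc u fun k => (hu k).le
      _ ≤ c • mu • u := smul_le_smul_of_nonneg_left hcw hc.le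
      _ = (c * mu) • u := smul_smul c mu u
  have hle_i : lam * (c * u i) ≤ mu * (c * u i) := by
    have := hle i
    simp only [Pi.smul_apply, smul_eq_mul, hvi] at this
    linarith
  exact le_of_mul_le_mul_right hle_i (mul_pos hc (hu i))

lemma sum_le_of_le_smul {u y : ι → ℝ} {t : ℝ} (hu : u ∈ stdSimplex ℝ ι) (hy : y ≤ t • u) :
    ∑ i, y i ≤ t :=
  calc ∑ i, y i ≤ ∑ i, t * u i := Finset.sum_le_sum fun i _ => hy i
    _ = t := by rw [← Finset.mul_sum, hu.2, mul_one]

lemma le_sum_of_smul_le {u y : ι → ℝ} {t : ℝ} (hu : u ∈ stdSimplex ℝ ι) (hy : t • u ≤ y) :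
    t ≤ ∑ i, y i :=
  calc t = ∑ i, t * u i := by rw [← Finset.mul_sum, hu.2, mul_one]
    _ ≤ ∑ i, y i := Finset.sum_le_sum fun i _ => hy i

lemma exists_eigenvector_ge_of_tendsto (hcont : ContinuousOn h {v : ι → ℝ | 0 ≤ v})
    {u : ℕ → ι → ℝ} {t ε : ℕ → ℝ} {r : ℝ} (hu : ∀ k, u k ∈ stdSimplex ℝ ι)
    (hε : Tendsto ε atTop (𝓝 0)) (hlow : ∀ k, h (u k) ≤ t k • u k)
    (hup : ∀ k, t k • u k ≤ Real.exp (ε k) • (h (u k) + fun _ => ε k)) (hr : ∀ k, r ≤ t k) :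
    ∃ w ∈ stdSimplex ℝ ι, ∃ lam, r ≤ lam ∧ h w = lam • w := by
  obtain ⟨w, hw, φ, hφ, hconv⟩ := (isCompact_stdSimplex ℝ ι).tendsto_subseq hu
  have hhw : Tendsto (fun k => h (u (φ k))) atTop (𝓝 (h w)) :=
    (hcont w hw.1).tendsto.comp
      (tendsto_nhdsWithin_iff.2 ⟨hconv, Eventually.of_forall fun k => (hu (φ k)).1⟩)
  have hεφ := hε.comp hφ.tendsto_atTop
  have hupper : Tendsto (fun k => Real.exp (ε (φ k)) • (h (u (φ k)) + fun _ => ε (φ k)))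
      atTop (𝓝 (h w)) := by
    simpa [← Pi.zero_def] using ((Real.continuous_exp.tendsto 0).comp hεφ).smul
      (hhw.add (tendsto_pi_nhds.2 fun _ => hεφ))
  have hsum : Continuous fun y : ι → ℝ => ∑ i, y i := by fun_prop
  -- summing the two inequalities squeezes `t k` between two sequences tending to `∑ i, h w i`
  have ht : Tendsto (t ∘ φ) atTop (𝓝 (∑ i, h w i)) :=
    tendsto_of_tendsto_of_tendsto_of_le_of_le ((hsum.tendsto _).comp hhw)
      ((hsum.tendsto _).comp hupper) (fun k => sum_le_of_le_smul (hu _) (hlow _))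
      (fun k => le_sum_of_smul_le (hu _) (hup _))
  refine ⟨w, hw, ∑ i, h w i, ge_of_tendsto' ht fun k => hr (φ k), le_antisymm ?_ ?_⟩
  · exact le_of_tendsto_of_tendsto' hhw (ht.smul hconv) fun k => hlow (φ k)
  · exact le_of_tendsto_of_tendsto' (ht.smul hconv) hupper fun k => hup (φ k)

end OrderPreserving

end CollatzWielandt

open CollatzWielandt in
/-- nonlinear Perron–Frobenius, Nussbaum: for a continuous,
positively homogeneous, order-preserving self-map `h` of the nonnegative
orthant of `ℝⁿ`, the cone eigenvalue spectral radius equals the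
Collatz–Wielandt number. -/
theorem eigenvalue_spectral_radius_eq_collatz_wielandt {n : ℕ}
    (h : (Fin n → ℝ) → (Fin n → ℝ))
    (hmap : ∀ v : Fin n → ℝ, 0 ≤ v → 0 ≤ h v)
    (hcont : ContinuousOn h {v : Fin n → ℝ | 0 ≤ v})
    (hhom : ∀ t : ℝ, 0 < t → ∀ v : Fin n → ℝ, 0 ≤ v → h (t • v) = t • h v)
    (hmono : ∀ v w : Fin n → ℝ, 0 ≤ v → v ≤ w → h v ≤ h w) :
    sSup {lam : ℝ | 0 ≤ lam ∧ ∃ v : Fin n → ℝ, 0 ≤ v ∧ v ≠ 0 ∧ h v = lam • v} =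
    sInf {lam : ℝ | 0 < lam ∧ ∃ v : Fin n → ℝ, (∀ i, 0 < v i) ∧ h v ≤ lam • v} := by
  set E := {lam : ℝ | 0 ≤ lam ∧ ∃ v : Fin n → ℝ, 0 ≤ v ∧ v ≠ 0 ∧ h v = lam • v}
  set C := {lam : ℝ | 0 < lam ∧ ∃ v : Fin n → ℝ, (∀ i, 0 < v i) ∧ h v ≤ lam • v}
  rcases isEmpty_or_nonempty (Fin n) with hempty | hne
  · have hE : E = ∅ := Set.eq_empty_of_forall_notMem fun _ ⟨_, v, _, hv, _⟩ =>
      hv (Subsingleton.elim v 0)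
    have hC : C = Set.Ioi 0 := Set.ext fun _ =>
      ⟨And.left, fun hlam => ⟨hlam, 0, isEmptyElim, fun i => isEmptyElim i⟩⟩
    rw [hE, hC, Real.sSup_empty, csInf_Ioi]
  have hEC : ∀ a ∈ E, ∀ b ∈ C, a ≤ b := fun _ ⟨_, _, hv0, hv, hev⟩ _ ⟨_, _, hu, hcw⟩ =>
    eigenvalue_le_of_map_le_smul hhom hmono hv0 hv hev hu hcw
  choose u hu hupos t ht hlow hup using fun k : ℕ =>
    exists_pos_approx_eigenvector hmap hhom hmono (Nat.one_div_pos_of_nat (n := k))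
  have hC : C.Nonempty := ⟨t 0, ht 0, u 0, hupos 0, hlow 0⟩
  have hC0 : ∀ b ∈ C, 0 ≤ b := fun _ hb => hb.1.le
  obtain ⟨w, hw, lam, hlam, hev⟩ := exists_eigenvector_ge_of_tendsto hcont hu
    tendsto_one_div_add_atTop_nhds_zero_nat hlow hup
    fun k => csInf_le ⟨0, hC0⟩ ⟨ht k, u k, hupos k, hlow k⟩
  have hlamE : lam ∈ E := ⟨(Real.sInf_nonneg hC0).trans hlam, w, hw.1,
    fun hw0 => by simpa [hw0] using hw.2, hev⟩
  exact le_antisymm (le_csInf hC fun b hb => csSup_le ⟨lam, hlamE⟩ fun a ha => hEC a ha b hb)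
    (hlam.trans (le_csSup ⟨_, fun a ha => hEC a ha _ hC.some_mem⟩ hlamE))
end

section
/- Let h and h_π, π in a finite set Π, be continuous, positively homogeneous, order-preserving self-maps of ℝ₊ⁿ with h(v) = max_{π∈Π} h_π(v) componentwise for all v ∈ ℝ₊ⁿ, the maximum being attained by a single π for each v. Then the Collatz–Wielandt spectral radius of h equals the maximum over π ∈ Π of the Collatz–Wielandt spectral radii of the h_π. -/
/-!
A positive vector `v` with `h v ≤ λ v` also satisfies `H π v ≤ λ v`, so `ρ(H π) ≤ ρ(h)`.
Conversely, minimising `max_i u_i / (h(u)_i + ε)` over the standard simplex produces a positive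
eigenvector of the perturbed map `u ↦ h u + ε`, whose eigenvalue bounds `ρ(h)`; letting `ε → 0`
by compactness gives a nonzero `u ≥ 0` with `ρ(h) u ≤ h u`. If `h u = H σ u`, then `u` is a
sub-eigenvector of `H σ`, and comparing it with the positive super-eigenvectors of the monotone
homogeneous map `H σ` gives `ρ(h) ≤ ρ(H σ)`.
-/

/-- The Collatz–Wielandt spectral radius of a self-map of the nonnegative
orthant of `ℝⁿ`. -/
noncomputable def collatzWielandt {n : ℕ} (g : (Fin n → ℝ) → (Fin n → ℝ)) : ℝ :=
  sInf {lam : ℝ | 0 < lam ∧ ∃ v : Fin n → ℝ, (∀ i, 0 < v i) ∧ g v ≤ lam • v}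

open Finset

section Orthant

variable {ι : Type*}

def OrderPreservingOnOrthant (g : (ι → ℝ) → (ι → ℝ)) : Prop :=
  ∀ v w : ι → ℝ, 0 ≤ v → v ≤ w → g v ≤ g w

def HomogeneousOnOrthant (g : (ι → ℝ) → (ι → ℝ)) : Prop :=
  ∀ t : ℝ, 0 < t → ∀ v : ι → ℝ, 0 ≤ v → g (t • v) = t • g v

variable [Fintype ι] {g : (ι → ℝ) → (ι → ℝ)}

theorem exists_pos_of_mem_stdSimplex {u : ι → ℝ} (hu : u ∈ stdSimplex ℝ ι) : ∃ i, 0 < u i := by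
  by_contra! hle
  have : ∑ i, u i ≤ 0 := sum_nonpos fun i _ => hle i
  linarith [hu.2]

theorem le_of_smul_le_of_le_smul (hmono : OrderPreservingOnOrthant g)
    (hhom : HomogeneousOnOrthant g) {u w : ι → ℝ} {μ ν : ℝ} (hu : 0 ≤ u) {i₀ : ι}
    (hi₀ : 0 < u i₀) (hsub : μ • u ≤ g u) (hw : ∀ i, 0 < w i) (hsup : g w ≤ ν • w) : μ ≤ ν := by
  have hne : (univ : Finset ι).Nonempty := ⟨i₀, mem_univ _⟩
  obtain ⟨i, -, hi⟩ := exists_mem_eq_sup' hne fun j => u j / w j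
  set t := univ.sup' hne fun j => u j / w j
  have ht : 0 < t := (div_pos hi₀ (hw i₀)).trans_le (le_sup' (fun j => u j / w j) (mem_univ i₀))
  have hut : u ≤ t • w := fun j =>
    (div_le_iff₀ (hw j)).1 (le_sup' (fun j => u j / w j) (mem_univ j))
  have hui : u i = t * w i := by rw [hi, div_mul_cancel₀ _ (hw i).ne']
  have key : μ * u i ≤ ν * u i :=
    calc μ * u i ≤ g u i := hsub i
      _ ≤ g (t • w) i := hmono u _ hu hut i
      _ = t * g w i := by rw [hhom t ht w fun j => (hw j).le]; rfl
      _ ≤ t * (ν * w i) := mul_le_mul_of_nonneg_left (hsup i) ht.le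
      _ = ν * u i := by rw [hui]; ring
  exact le_of_mul_le_mul_right key (hui ▸ mul_pos ht (hw i))

-- The witness `w` is `g u + ε`, normalised to the simplex.
theorem exists_larger_subeigenvalue (hg : ∀ v, 0 ≤ v → 0 ≤ g v)
    (hmono : OrderPreservingOnOrthant g) (hhom : HomogeneousOnOrthant g) {ε μ : ℝ}
    (hε : 0 < ε) (hμ : 0 < μ) {u : ι → ℝ} (hu : u ∈ stdSimplex ℝ ι)
    (hsub : ∀ i, μ * u i ≤ g u i + ε) {j : ι} (hj : μ * u j < g u j + ε) :
    ∃ w ∈ stdSimplex ℝ ι, ∃ μ' > μ, ∀ i, μ' * w i ≤ g w i + ε := by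
  set v : ι → ℝ := fun i => g u i + ε
  have hv : ∀ i, 0 < v i := fun i => add_pos_of_nonneg_of_pos (hg u hu.1 i) hε
  set s := ∑ i, v i
  have hs : μ < s := by
    calc μ = ∑ i, μ * u i := by rw [← mul_sum, hu.2, mul_one]
      _ < s := sum_lt_sum (fun i _ => hsub i) ⟨j, mem_univ j, hj⟩
  have hs₀ : 0 < s := hμ.trans hs
  set w := s⁻¹ • v
  have hw : w ∈ stdSimplex ℝ ι := by
    refine ⟨fun i => ?_, ?_⟩
    · exact mul_nonneg (inv_nonneg.2 hs₀.le) (hv i).le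
    · simp only [w, Pi.smul_apply, smul_eq_mul, ← mul_sum]
      exact inv_mul_cancel₀ hs₀.ne'
  have hgv : μ • g u ≤ g v := by
    rw [← hhom μ hμ u hu.1]
    exact hmono _ _ (smul_nonneg hμ.le hu.1) (fun i => hsub i)
  have hgw : g w = s⁻¹ • g v := hhom _ (inv_pos.2 hs₀) v fun i => (hv i).le
  set η := ε * (s - μ) / s
  have hη : 0 < η := div_pos (mul_pos hε (sub_pos.2 hs)) hs₀
  refine ⟨w, hw, μ + η, lt_add_of_pos_right μ hη, fun i => ?_⟩
  have hwi : w i ≤ 1 := (mem_Icc_of_mem_stdSimplex hw i).2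
  have hgvi : μ * g u i ≤ g v i := hgv i
  calc (μ + η) * w i ≤ μ * w i + η := by nlinarith
    _ = s⁻¹ * (μ * g u i) + ε := by
        simp only [w, v, η, Pi.smul_apply, smul_eq_mul]; field_simp; ring
    _ ≤ s⁻¹ * g v i + ε := by gcongr
    _ = g w i + ε := by rw [hgw]; rfl

-- The eigenvector is a minimiser of `max_i u_i / (g(u)_i + ε)` over the simplex.
theorem exists_perturbed_eigenvector [Nonempty ι] (hg : ∀ v, 0 ≤ v → 0 ≤ g v)
    (hcont : ContinuousOn g (stdSimplex ℝ ι)) (hmono : OrderPreservingOnOrthant g)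
    (hhom : HomogeneousOnOrthant g) {ε : ℝ} (hε : 0 < ε) :
    ∃ μ > 0, ∃ u ∈ stdSimplex ℝ ι, (∀ i, 0 < u i) ∧ ∀ i, g u i + ε = μ * u i := by
  classical
  have hden : ∀ u ∈ stdSimplex ℝ ι, ∀ i, 0 < g u i + ε := fun u hu i =>
    add_pos_of_nonneg_of_pos (hg u hu.1 i) hε
  set f : (ι → ℝ) → ℝ := fun u => univ.sup' univ_nonempty fun i => u i / (g u i + ε)
  have hf : ContinuousOn f (stdSimplex ℝ ι) :=
    ContinuousOn.finset_sup'_apply _ fun i _ => (continuous_apply i).continuousOn.div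
      (((continuous_apply i).comp_continuousOn hcont).add continuousOn_const)
      fun u hu => (hden u hu i).ne'
  have hf_le : ∀ v ∈ stdSimplex ℝ ι, ∀ t > 0, f v ≤ t ↔ ∀ i, t⁻¹ * v i ≤ g v i + ε := by
    intro v hv t ht
    simp only [f, sup'_le_iff, mem_univ, true_imp_iff, div_le_iff₀ (hden v hv _),
      inv_mul_le_iff₀ ht]
  obtain ⟨u, hu, hmin⟩ := (isCompact_stdSimplex ℝ ι).exists_isMinOn
    ⟨_, single_mem_stdSimplex ℝ (Classical.arbitrary ι)⟩ hf
  obtain ⟨i₀, hi₀⟩ := exists_pos_of_mem_stdSimplex hu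
  have hfu : 0 < f u := (div_pos hi₀ (hden u hu i₀)).trans_le
    (le_sup' (fun i => u i / (g u i + ε)) (mem_univ i₀))
  have hsub := (hf_le u hu (f u) hfu).1 le_rfl
  have heig : ∀ i, g u i + ε = (f u)⁻¹ * u i := by
    refine fun i => ((hsub i).lt_or_eq.resolve_left fun hlt => ?_).symm
    obtain ⟨w, hw, μ', hμ', hw_sub⟩ :=
      exists_larger_subeigenvalue hg hmono hhom hε (inv_pos.2 hfu) hu hsub hlt
    have hfw : f w ≤ μ'⁻¹ :=
      (hf_le w hw μ'⁻¹ (inv_pos.2 ((inv_pos.2 hfu).trans hμ'))).2 (by simpa using hw_sub)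
    exact (hfw.trans_lt (inv_lt_of_inv_lt₀ hfu hμ')).not_ge (hmin hw)
  refine ⟨(f u)⁻¹, inv_pos.2 hfu, u, hu, fun i => ?_, heig⟩
  exact pos_of_mul_pos_right ((heig i) ▸ hden u hu i) (inv_pos.2 hfu).le

end Orthant

section CollatzWielandt

variable {n : ℕ} {g : (Fin n → ℝ) → (Fin n → ℝ)}

theorem collatzWielandt_le {r : ℝ} {v : Fin n → ℝ} (hr : 0 < r) (hv : ∀ i, 0 < v i)
    (hgv : g v ≤ r • v) : collatzWielandt g ≤ r :=
  csInf_le ⟨0, fun _ hx => hx.1.le⟩ ⟨hr, v, hv, hgv⟩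

theorem le_collatzWielandt {μ : ℝ}
    (hμ : ∀ r > 0, ∀ v : Fin n → ℝ, (∀ i, 0 < v i) → g v ≤ r • v → μ ≤ r) :
    μ ≤ collatzWielandt g := by
  refine le_csInf ⟨1 + ‖g 1‖, by positivity, 1, fun _ => one_pos, fun i => ?_⟩
    fun r ⟨hr, v, hv, hgv⟩ => hμ r hr v hv hgv
  have : g 1 i ≤ ‖g 1‖ := (le_abs_self _).trans (norm_le_pi_norm (g 1) i)
  simp only [Pi.smul_apply, Pi.one_apply, smul_eq_mul, mul_one]
  linarith

theorem collatzWielandt_mono {g' : (Fin n → ℝ) → (Fin n → ℝ)}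
    (hle : ∀ v, (∀ i, 0 < v i) → g v ≤ g' v) : collatzWielandt g ≤ collatzWielandt g' :=
  le_collatzWielandt fun _ hr v hv hgv => collatzWielandt_le hr hv ((hle v hv).trans hgv)

theorem collatzWielandt_fin_zero (g : (Fin 0 → ℝ) → (Fin 0 → ℝ)) : collatzWielandt g = 0 := by
  refine le_antisymm (le_of_forall_pos_le_add fun ε hε => ?_)
    (le_collatzWielandt fun _ hr _ _ _ => hr.le)
  simpa using collatzWielandt_le (g := g) (v := 0) hε finZeroElim finZeroElim

theorem le_collatzWielandt_of_smul_le (hmono : OrderPreservingOnOrthant g)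
    (hhom : HomogeneousOnOrthant g) {u : Fin n → ℝ} {μ : ℝ} (hu : 0 ≤ u) {i₀ : Fin n}
    (hi₀ : 0 < u i₀) (hsub : μ • u ≤ g u) : μ ≤ collatzWielandt g :=
  le_collatzWielandt fun _ _ _ hw hgw => le_of_smul_le_of_le_smul hmono hhom hu hi₀ hsub hw hgw

theorem exists_mem_stdSimplex_collatzWielandt_smul_le (hn : 0 < n)
    (hg : ∀ v, 0 ≤ v → 0 ≤ g v) (hcont : ContinuousOn g (stdSimplex ℝ (Fin n)))
    (hmono : OrderPreservingOnOrthant g) (hhom : HomogeneousOnOrthant g) :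
    ∃ u ∈ stdSimplex ℝ (Fin n), collatzWielandt g • u ≤ g u := by
  have : Nonempty (Fin n) := ⟨⟨0, hn⟩⟩
  set c := collatzWielandt g
  set F : (Fin n → ℝ) → ℝ := fun u => univ.sup' univ_nonempty fun i => c * u i - g u i
  have hF : ContinuousOn F (stdSimplex ℝ (Fin n)) :=
    ContinuousOn.finset_sup'_apply _ fun i _ => (continuous_apply i).continuousOn.const_smul c
      |>.sub ((continuous_apply i).comp_continuousOn hcont)
  obtain ⟨u, hu, hmin⟩ := (isCompact_stdSimplex ℝ (Fin n)).exists_isMinOn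
    ⟨_, single_mem_stdSimplex ℝ (Classical.arbitrary (Fin n))⟩ hF
  have hFu : F u ≤ 0 := le_of_forall_pos_le_add fun ε hε => by
    obtain ⟨μ, hμ, v, hv, hvpos, heig⟩ := exists_perturbed_eigenvector hg hcont hmono hhom hε
    have hcμ : c ≤ μ := collatzWielandt_le hμ hvpos fun i => by
      simpa [← heig i] using hε.le
    calc F u ≤ F v := hmin hv
      _ ≤ 0 + ε := sup'_le _ _ fun i _ => by nlinarith [heig i, hv.1 i]
  refine ⟨u, hu, fun i => ?_⟩
  have := (sup'_le_iff _ _).1 hFu i (mem_univ i)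
  simp only [Pi.smul_apply, smul_eq_mul]
  linarith

end CollatzWielandt

theorem collatzWielandt_of_max_general {n : ℕ} {P : Type*} [Fintype P] [Nonempty P]
    (h : (Fin n → ℝ) → (Fin n → ℝ)) (H : P → (Fin n → ℝ) → (Fin n → ℝ))
    (hmap : ∀ v : Fin n → ℝ, 0 ≤ v → 0 ≤ h v)
    (hcont : ContinuousOn h {v : Fin n → ℝ | 0 ≤ v})
    (hhom : ∀ t : ℝ, 0 < t → ∀ v : Fin n → ℝ, 0 ≤ v → h (t • v) = t • h v)
    (hmono : ∀ v w : Fin n → ℝ, 0 ≤ v → v ≤ w → h v ≤ h w)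
    (hhomP : ∀ π, ∀ t : ℝ, 0 < t → ∀ v : Fin n → ℝ, 0 ≤ v → H π (t • v) = t • H π v)
    (hmonoP : ∀ π, ∀ v w : Fin n → ℝ, 0 ≤ v → v ≤ w → H π v ≤ H π w)
    (hge : ∀ (π : P) (v : Fin n → ℝ), 0 ≤ v → H π v ≤ h v)
    (hatt : ∀ v : Fin n → ℝ, 0 ≤ v → ∃ π : P, h v = H π v) :
    collatzWielandt h =
      Finset.univ.sup' Finset.univ_nonempty (fun π => collatzWielandt (H π)) := by
  refine le_antisymm ?_ (sup'_le _ _ fun π _ =>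
    collatzWielandt_mono fun v hv => hge π v fun i => (hv i).le)
  obtain ⟨σ, hσ⟩ : ∃ σ, collatzWielandt h ≤ collatzWielandt (H σ) := by
    rcases Nat.eq_zero_or_pos n with rfl | hn
    · exact ⟨Classical.arbitrary P, by simp only [collatzWielandt_fin_zero, le_rfl]⟩
    obtain ⟨u, hu, hsub⟩ := exists_mem_stdSimplex_collatzWielandt_smul_le hn hmap
      (hcont.mono fun v hv => hv.1) hmono hhom
    obtain ⟨σ, hσ⟩ := hatt u hu.1
    obtain ⟨i, hi⟩ := exists_pos_of_mem_stdSimplex hu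
    exact ⟨σ, le_collatzWielandt_of_smul_le (hmonoP σ) (hhomP σ) hu.1 hi (hσ ▸ hsub)⟩
  exact hσ.trans (le_sup' (fun π => collatzWielandt (H π)) (mem_univ σ))

/-- if `h` is the pointwise maximum (attained at each point) of a
finite family `H π` of continuous, positively homogeneous, order-preserving
self-maps of the nonnegative orthant, then the spectral radius of `h` is the
maximum of the spectral radii of the `H π`. -/
theorem collatzWielandt_of_max {n : ℕ} {P : Type*} [Fintype P] [Nonempty P]
    (h : (Fin n → ℝ) → (Fin n → ℝ)) (H : P → (Fin n → ℝ) → (Fin n → ℝ))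
    (hmap : ∀ v : Fin n → ℝ, 0 ≤ v → 0 ≤ h v)
    (hcont : ContinuousOn h {v : Fin n → ℝ | 0 ≤ v})
    (hhom : ∀ t : ℝ, 0 < t → ∀ v : Fin n → ℝ, 0 ≤ v → h (t • v) = t • h v)
    (hmono : ∀ v w : Fin n → ℝ, 0 ≤ v → v ≤ w → h v ≤ h w)
    (hmapP : ∀ π, ∀ v : Fin n → ℝ, 0 ≤ v → 0 ≤ H π v)
    (hcontP : ∀ π, ContinuousOn (H π) {v : Fin n → ℝ | 0 ≤ v})
    (hhomP : ∀ π, ∀ t : ℝ, 0 < t → ∀ v : Fin n → ℝ, 0 ≤ v → H π (t • v) = t • H π v)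
    (hmonoP : ∀ π, ∀ v w : Fin n → ℝ, 0 ≤ v → v ≤ w → H π v ≤ H π w)
    (hge : ∀ (π : P) (v : Fin n → ℝ), 0 ≤ v → H π v ≤ h v)
    (hatt : ∀ v : Fin n → ℝ, 0 ≤ v → ∃ π : P, h v = H π v) :
    collatzWielandt h =
      Finset.univ.sup' Finset.univ_nonempty (fun π => collatzWielandt (H π)) :=
  collatzWielandt_of_max_general h H hmap hcont hhom hmono hhomP hmonoP hge hatt
end

section
/- Let M be a finite rectangular set of n×n row-stochastic (Markov) matrices (i.e., M is the Cartesian product of its sets of rows), each having a unique final (recurrent) class containing a fixed state c. Let M_(c) denote M with its c-th column set to zero, and define f̄(v) = max_{M∈M} M_(c)v componentwise. Then the equation φ = 1 + f̄(φ) has a unique solution φ ∈ ℝⁿ, and φ_i equals the maximal expected first return/hitting time to c over the matrices in M, i.e. φ_i = max_{M∈M} T_{ic}(M). -/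
/-- `M` with its `c`-th column set to zero. -/
def colZero {n : ℕ} (M : Matrix (Fin n) (Fin n) ℝ) (c : Fin n) :
    Matrix (Fin n) (Fin n) ℝ :=
  Matrix.of fun i j => if j = c then 0 else M i j

/-- The expected first return/hitting time (at times `≥ 1`) to state `c`
starting from `i`, for the Markov chain with transition matrix `M`:
`T_{ic}(M) = Σ_{k≥0} P(τ_c > k | X_0 = i) = Σ_{k≥0} ((M_(c))^k 1)_i`. -/
noncomputable def expReturnTime {n : ℕ} (M : Matrix (Fin n) (Fin n) ℝ)
    (c i : Fin n) : ℝ :=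
  ∑' k : ℕ, ((colZero M c) ^ k).mulVec (fun _ => 1) i

/-!
For a nonnegative matrix `Q` whose Neumann series `T = Σₖ Qᵏ 1` converges, `T` is the unique
solution of `T = 1 + Q T`, and more precisely `u ≤ 1 + Q u` forces `u ≤ T` while `1 + Q u ≤ u`
forces `T ≤ u`: the difference `w` satisfies `w ≤ Q w ≤ Qᵏ w → 0`.

Applied to `Q = M_(c)`, every solution `φ` of `φ = 1 + f̄(φ)` dominates each `T(M)`, and
rectangularity provides a matrix `N ∈ M` realising the maximum in `f̄(φ)` in every row at once, so
that `φ = 1 + N_(c) φ` and `φ = T(N)`. Hence `φ = max_M T(M)`, which gives uniqueness. For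
existence, take `M` maximising `Σᵢ Tᵢ(M)` and `N` realising `f̄(T(M))`: then `T(M) ≤ T(N)`,
so `T(M) = T(N)` by maximality, and `T(M)` solves the equation.
-/

open Filter Topology

namespace Matrix

variable {ι : Type*} [Fintype ι] {Q : Matrix ι ι ℝ}

lemma mulVec_mono_of_nonneg (hQ : ∀ i j, 0 ≤ Q i j) {u v : ι → ℝ} (h : u ≤ v) :
    Q *ᵥ u ≤ Q *ᵥ v :=
  fun i => dotProduct_le_dotProduct_of_nonneg_left h (hQ i)

variable [DecidableEq ι]

/-- For substochastic `Q`, the expected lifetime of the chain killed at rate `1 - Σⱼ Qᵢⱼ`;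
`expReturnTime M c` is definitionally `expectedLifetime (colZero M c)`. -/
noncomputable def expectedLifetime (Q : Matrix ι ι ℝ) (i : ι) : ℝ :=
  ∑' k : ℕ, (Q ^ k *ᵥ 1) i

lemma expectedLifetime_eq_one_add_mulVec (hsum : ∀ i, Summable fun k : ℕ => (Q ^ k *ᵥ 1) i) :
    expectedLifetime Q = 1 + Q *ᵥ expectedLifetime Q := by
  ext i
  have hshift : ∀ k : ℕ, (Q ^ (k + 1) *ᵥ 1) i = ∑ j, Q i j * (Q ^ k *ᵥ 1) j := fun k => by
    rw [pow_succ', ← mulVec_mulVec]; rfl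
  calc expectedLifetime Q i
      = 1 + ∑' k : ℕ, (Q ^ (k + 1) *ᵥ 1) i := by
        rw [expectedLifetime, (hsum i).tsum_eq_zero_add, pow_zero, one_mulVec, Pi.one_apply]
    _ = 1 + ∑ j, ∑' k : ℕ, Q i j * (Q ^ k *ᵥ 1) j := by
        rw [tsum_congr hshift, Summable.tsum_finsetSum fun j _ => (hsum j).mul_left _]
    _ = (1 + Q *ᵥ expectedLifetime Q) i := by
        simp only [tsum_mul_left, Pi.add_apply, Pi.one_apply, mulVec, dotProduct, expectedLifetime]

section Summable

variable (hQ : ∀ i j, 0 ≤ Q i j) (hsum : ∀ i, Summable fun k : ℕ => (Q ^ k *ᵥ 1) i)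
include hQ hsum

/-- Squeeze `Qᵏ u` between `∓‖u‖ Qᵏ 1`, whose entries are terms of convergent series. -/
lemma tendsto_pow_mulVec_apply_zero (u : ι → ℝ) (i : ι) :
    Tendsto (fun k : ℕ => (Q ^ k *ᵥ u) i) atTop (𝓝 0) := by
  have hu : ∀ j, |u j| ≤ ‖u‖ := fun j => by simpa using norm_le_pi_norm u j
  have hlo : -(‖u‖ • 1) ≤ u := fun j => by simpa using neg_le_of_abs_le (hu j)
  have hhi : u ≤ ‖u‖ • 1 := fun j => by simpa using le_of_abs_le (hu j)
  have hlim : Tendsto (fun k : ℕ => (Q ^ k *ᵥ (‖u‖ • 1)) i) atTop (𝓝 0) := by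
    simpa [mulVec_smul] using ((hsum i).tendsto_atTop_zero).const_mul ‖u‖
  refine tendsto_of_tendsto_of_tendsto_of_le_of_le (by simpa using hlim.neg) hlim
    (fun k => ?_) (fun k => ?_)
  · simpa [mulVec_neg] using mulVec_mono_of_nonneg (pow_apply_nonneg hQ k) hlo i
  · exact mulVec_mono_of_nonneg (pow_apply_nonneg hQ k) hhi i

lemma nonpos_of_le_mulVec {w : ι → ℝ} (h : w ≤ Q *ᵥ w) : w ≤ 0 := by
  have hpow : ∀ k : ℕ, w ≤ Q ^ k *ᵥ w := by
    intro k
    induction k with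
    | zero => simp
    | succ k ih =>
      calc w ≤ Q *ᵥ w := h
        _ ≤ Q *ᵥ (Q ^ k *ᵥ w) := mulVec_mono_of_nonneg hQ ih
        _ = Q ^ (k + 1) *ᵥ w := by rw [mulVec_mulVec, pow_succ']
  exact fun i => ge_of_tendsto' (tendsto_pow_mulVec_apply_zero hQ hsum w i) (fun k => hpow k i)

lemma le_expectedLifetime {u : ι → ℝ} (h : u ≤ 1 + Q *ᵥ u) : u ≤ expectedLifetime Q := by
  refine sub_nonpos.1 (nonpos_of_le_mulVec hQ hsum ?_)
  calc u - expectedLifetime Q ≤ (1 + Q *ᵥ u) - (1 + Q *ᵥ expectedLifetime Q) :=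
        sub_le_sub h (expectedLifetime_eq_one_add_mulVec hsum).ge
    _ = Q *ᵥ (u - expectedLifetime Q) := by rw [mulVec_sub]; abel

lemma expectedLifetime_le {u : ι → ℝ} (h : 1 + Q *ᵥ u ≤ u) : expectedLifetime Q ≤ u := by
  refine sub_nonpos.1 (nonpos_of_le_mulVec hQ hsum ?_)
  calc expectedLifetime Q - u ≤ (1 + Q *ᵥ expectedLifetime Q) - (1 + Q *ᵥ u) :=
        sub_le_sub (expectedLifetime_eq_one_add_mulVec hsum).le h
    _ = Q *ᵥ (expectedLifetime Q - u) := by rw [mulVec_sub]; abel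

end Summable

end Matrix

open Matrix

section RenewalEquation

variable {n : ℕ} {S : Finset (Matrix (Fin n) (Fin n) ℝ)}

lemma colZero_nonneg {M : Matrix (Fin n) (Fin n) ℝ} (hM : ∀ i j, 0 ≤ M i j) (c : Fin n) :
    ∀ i j, 0 ≤ colZero M c i j := fun i j => by
  simp only [colZero, of_apply]
  split_ifs
  exacts [le_rfl, hM i j]

lemma exists_mem_colZero_mulVec_eq_sup' (hS : S.Nonempty)
    (hrect : ∀ g : Fin n → Matrix (Fin n) (Fin n) ℝ, (∀ i, g i ∈ S) →
      (Matrix.of fun i j => g i i j) ∈ S) (c : Fin n) (v : Fin n → ℝ) :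
    ∃ N ∈ S, ∀ i, (colZero N c *ᵥ v) i = S.sup' hS fun M => (colZero M c *ᵥ v) i := by
  choose g hgS hg using fun i => Finset.exists_mem_eq_sup' hS fun M => (colZero M c *ᵥ v) i
  exact ⟨Matrix.of fun i j => g i i j, hrect g hgS, fun i => (hg i).symm⟩

variable {c : Fin n} (hS : S.Nonempty) (hpos : ∀ M ∈ S, ∀ i j, 0 ≤ M i j)
  (hrect : ∀ g : Fin n → Matrix (Fin n) (Fin n) ℝ, (∀ i, g i ∈ S) →
    (Matrix.of fun i j => g i i j) ∈ S)
  (hfin : ∀ M ∈ S, ∀ i, Summable fun k : ℕ => ((colZero M c) ^ k).mulVec (fun _ => 1) i)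
include hpos hrect hfin

lemma eq_sup'_expReturnTime_of_eq_one_add_sup' (φ : Fin n → ℝ)
    (hφ : ∀ i, φ i = 1 + S.sup' hS fun M => (colZero M c *ᵥ φ) i) (i : Fin n) :
    φ i = S.sup' hS fun M => expReturnTime M c i := by
  have hdom : ∀ M ∈ S, expectedLifetime (colZero M c) ≤ φ := fun M hM =>
    expectedLifetime_le (colZero_nonneg (hpos M hM) c) (hfin M hM) fun j => by
      rw [hφ j]
      exact add_le_add_right (Finset.le_sup' (fun M => (colZero M c *ᵥ φ) j) hM) 1
  obtain ⟨N, hNS, hN⟩ := exists_mem_colZero_mulVec_eq_sup' hS hrect c φ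
  have hφN : φ ≤ expectedLifetime (colZero N c) :=
    le_expectedLifetime (colZero_nonneg (hpos N hNS) c) (hfin N hNS) fun j => by
      rw [Pi.add_apply, Pi.one_apply, hN j, ← hφ j]
  exact le_antisymm ((hφN i).trans (Finset.le_sup' (fun M => expReturnTime M c i) hNS))
    (Finset.sup'_le hS _ fun M hM => hdom M hM i)

lemma exists_eq_one_add_sup' :
    ∃ φ : Fin n → ℝ, ∀ i, φ i = 1 + S.sup' hS fun M => (colZero M c *ᵥ φ) i := by
  obtain ⟨M, hMS, hMmax⟩ := S.exists_max_image (fun M => ∑ i, expReturnTime M c i) hS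
  set ψ := expectedLifetime (colZero M c)
  obtain ⟨N, hNS, hN⟩ := exists_mem_colZero_mulVec_eq_sup' hS hrect c ψ
  have hψN : ψ ≤ expectedLifetime (colZero N c) :=
    le_expectedLifetime (colZero_nonneg (hpos N hNS) c) (hfin N hNS) fun j =>
      calc ψ j = 1 + (colZero M c *ᵥ ψ) j :=
            congrFun (expectedLifetime_eq_one_add_mulVec (hfin M hMS)) j
        _ ≤ 1 + (colZero N c *ᵥ ψ) j := by
            rw [hN j]
            exact add_le_add_right (Finset.le_sup' (fun M' => (colZero M' c *ᵥ ψ) j) hMS) 1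
  have hψ_eq : ψ = expectedLifetime (colZero N c) := funext fun j =>
    (Finset.sum_eq_sum_iff_of_le fun j _ => hψN j).1
      ((Finset.sum_le_sum fun j _ => hψN j).antisymm (hMmax N hNS)) j (Finset.mem_univ j)
  refine ⟨ψ, fun i => ?_⟩
  rw [← hN i, hψ_eq]
  exact congrFun (expectedLifetime_eq_one_add_mulVec (hfin N hNS)) i

end RenewalEquation

theorem renewal_time_equation_unique_solution_general {n : ℕ} (c : Fin n)
    (S : Finset (Matrix (Fin n) (Fin n) ℝ)) (hS : S.Nonempty)
    (hpos : ∀ M ∈ S, ∀ i j, 0 ≤ M i j)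
    (hrect : ∀ g : Fin n → Matrix (Fin n) (Fin n) ℝ, (∀ i, g i ∈ S) →
        (Matrix.of fun i j => g i i j) ∈ S)
    (hfin : ∀ M ∈ S, ∀ i,
        Summable fun k : ℕ => ((colZero M c) ^ k).mulVec (fun _ => 1) i) :
    (∃! φ : Fin n → ℝ,
        ∀ i, φ i = 1 + S.sup' hS fun M => (colZero M c).mulVec φ i) ∧
    ∀ φ : Fin n → ℝ,
      (∀ i, φ i = 1 + S.sup' hS fun M => (colZero M c).mulVec φ i) →
      ∀ i, φ i = S.sup' hS fun M => expReturnTime M c i := by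
  have hsol := eq_sup'_expReturnTime_of_eq_one_add_sup' hS hpos hrect hfin
  obtain ⟨ψ, hψ⟩ := exists_eq_one_add_sup' hS hpos hrect hfin
  exact ⟨⟨ψ, hψ, fun φ hφ => funext fun i => (hsol φ hφ i).trans (hsol ψ hψ i).symm⟩, hsol⟩

/-- for a finite rectangular set `S` of Markov matrices, each
having finite expected return times to a fixed state `c` (equivalently, a
unique final class containing `c`), the equation `φ = 1 + f̄(φ)`, where
`f̄(v)_i = max_{M ∈ S} (M_(c) v)_i`, has a unique solution `φ`, and this
solution satisfies `φ_i = max_{M ∈ S} T_{ic}(M)`. -/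
theorem renewal_time_equation_unique_solution {n : ℕ} (c : Fin n)
    (S : Finset (Matrix (Fin n) (Fin n) ℝ)) (hS : S.Nonempty)
    (hpos : ∀ M ∈ S, ∀ i j, 0 ≤ M i j)
    (hstoch : ∀ M ∈ S, ∀ i, ∑ j, M i j = 1)
    (hrect : ∀ g : Fin n → Matrix (Fin n) (Fin n) ℝ, (∀ i, g i ∈ S) →
        (Matrix.of fun i j => g i i j) ∈ S)
    (hfin : ∀ M ∈ S, ∀ i,
        Summable fun k : ℕ => ((colZero M c) ^ k).mulVec (fun _ => 1) i) :
    (∃! φ : Fin n → ℝ,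
        ∀ i, φ i = 1 + S.sup' hS fun M => (colZero M c).mulVec φ i) ∧
    ∀ φ : Fin n → ℝ,
      (∀ i, φ i = 1 + S.sup' hS fun M => (colZero M c).mulVec φ i) →
      ∀ i, φ i = S.sup' hS fun M => expReturnTime M c i :=
  renewal_time_equation_unique_solution_general c S hS hpos hrect hfin
end

section
/- Let M be an n×n Markov matrix, c a state, and φ ∈ ℝⁿ a vector with strictly positive coordinates satisfying φ ≥ 1 + M_(c)φ componentwise, with K ≥ ‖φ‖∞ and K ≥ 1. Define M_(c,φ) by replacing the c-th column of M with the vector (1/φ_c)(φ − 1 − M_(c)φ). Then M_(c,φ) has nonnegative entries, satisfies M_(c,φ)φ = φ − 1 ≤ ((K−1)/K)·φ, and for all η ∈ ℝ and v ∈ ℝⁿ with v_c = 0, Mv + η(φ − 1) = M_(c,φ)(v + ηφ). -/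
open Matrix

section

variable {n : ℕ} (M : Matrix (Fin n) (Fin n) ℝ) (c : Fin n)

theorem updateCol_mulVec_apply (u w : Fin n → ℝ) (i : Fin n) :
    (M.updateCol c u *ᵥ w) i = (colZero M c *ᵥ w) i + u i * w c := by
  simp only [mulVec, dotProduct, updateCol_apply, colZero, of_apply, ite_mul, zero_mul,
    Finset.sum_ite, Finset.filter_eq', Finset.mem_univ, if_true, Finset.sum_singleton,
    Finset.sum_const_zero, zero_add]
  ring

theorem colZero_mulVec_of_apply_eq_zero {v : Fin n → ℝ} (hv : v c = 0) :
    colZero M c *ᵥ v = M *ᵥ v := by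
  ext i
  simpa [hv] using (updateCol_mulVec_apply M c (fun i => M i c) v i).symm

end

theorem sub_one_le_div_mul_of_le {x K : ℝ} (hx : 0 < x) (hxK : x ≤ K) :
    x - 1 ≤ (K - 1) / K * x := by
  have hK : 0 < K := hx.trans_le hxK
  rw [sub_div, div_self hK.ne', sub_mul, one_mul, sub_le_sub_iff_left,
    div_mul_eq_mul_div, one_mul, div_le_one hK]
  exact hxK

theorem modified_matrix_properties_general {n : ℕ} (M : Matrix (Fin n) (Fin n) ℝ)
    (c : Fin n)
    (hpos : ∀ i j, 0 ≤ M i j)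
    (φ : Fin n → ℝ) (hφ : ∀ i, 0 < φ i)
    (hineq : ∀ i, 1 + (colZero M c).mulVec φ i ≤ φ i)
    (K : ℝ) (hK : ∀ i, φ i ≤ K)
    (Mcφ : Matrix (Fin n) (Fin n) ℝ)
    (hdef : Mcφ = Matrix.of fun i j =>
        if j = c then (φ c)⁻¹ * (φ i - 1 - (colZero M c).mulVec φ i) else M i j) :
    (∀ i j, 0 ≤ Mcφ i j) ∧
    (∀ i, Mcφ.mulVec φ i = φ i - 1) ∧
    (∀ i, φ i - 1 ≤ (K - 1) / K * φ i) ∧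
    (∀ (η : ℝ) (v : Fin n → ℝ), v c = 0 →
      ∀ i, M.mulVec v i + η * (φ i - 1) = Mcφ.mulVec (v + η • φ) i) := by
  set u : Fin n → ℝ := fun i => (φ c)⁻¹ * (φ i - 1 - (colZero M c *ᵥ φ) i) with hu
  replace hdef : Mcφ = M.updateCol c u := by
    rw [hdef]
    ext i j
    rw [updateCol_apply, of_apply]
  have hφc : φ c ≠ 0 := (hφ c).ne'
  subst hdef
  refine ⟨fun i j => ?_, fun i => ?_, fun i => sub_one_le_div_mul_of_le (hφ i) (hK i),
    fun η v hv i => ?_⟩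
  · rw [updateCol_apply]
    split_ifs
    · exact mul_nonneg (inv_nonneg.2 (hφ c).le) (by linarith [hineq i])
    · exact hpos i j
  · rw [updateCol_mulVec_apply, hu]
    field_simp
    ring
  · rw [updateCol_mulVec_apply, mulVec_add, mulVec_smul, colZero_mulVec_of_apply_eq_zero M c hv]
    simp only [hu, Pi.add_apply, Pi.smul_apply, smul_eq_mul, hv, zero_add]
    field_simp
    ring

/-- Lemma `lemma-equiv`: with `φ > 0`, `φ ≥ 1 + M_(c)φ`,
`K ≥ ‖φ‖∞`, `K ≥ 1`, the matrix `M_(c,φ)` obtained by replacing the `c`-th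
column of `M` by `(1/φ_c)(φ - 1 - M_(c)φ)` is nonnegative, satisfies
`M_(c,φ)φ = φ - 1 ≤ ((K-1)/K)φ`, and for `v_c = 0`,
`Mv + η(φ - 1) = M_(c,φ)(v + ηφ)`. -/
theorem modified_matrix_properties {n : ℕ} (M : Matrix (Fin n) (Fin n) ℝ)
    (c : Fin n)
    (hpos : ∀ i j, 0 ≤ M i j)
    (hstoch : ∀ i, ∑ j, M i j = 1)
    (φ : Fin n → ℝ) (hφ : ∀ i, 0 < φ i)
    (hineq : ∀ i, 1 + (colZero M c).mulVec φ i ≤ φ i)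
    (K : ℝ) (hK1 : 1 ≤ K) (hK : ∀ i, φ i ≤ K)
    (Mcφ : Matrix (Fin n) (Fin n) ℝ)
    (hdef : Mcφ = Matrix.of fun i j =>
        if j = c then (φ c)⁻¹ * (φ i - 1 - (colZero M c).mulVec φ i) else M i j) :
    (∀ i j, 0 ≤ Mcφ i j) ∧
    (∀ i, Mcφ.mulVec φ i = φ i - 1) ∧
    (∀ i, φ i - 1 ≤ (K - 1) / K * φ i) ∧
    (∀ (η : ℝ) (v : Fin n → ℝ), v c = 0 →
      ∀ i, M.mulVec v i + η * (φ i - 1) = Mcφ.mulVec (v + η • φ) i) :=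
  modified_matrix_properties_general M c hpos φ hφ hineq K hK Mcφ hdef
end

section
/- Let M be an n×n Markov matrix, c a state, and φ strictly positive with φ ≥ 1 + M_(c)φ and K ≥ ‖φ‖∞. Then the map w ↦ φ⁻¹·(M_(c,φ)(φ·w)) is given by a matrix M' with nonnegative entries and row sums at most λ = (K−1)/K; hence it is order-preserving and a sup-norm contraction with factor λ. -/
/-! Conjugating by the positive diagonal `φ` turns the identity `M_(c,φ) φ = φ - 1` into the
row-sum bound `∑ⱼ M'ᵢⱼ = 1 - 1/φᵢ ≤ 1 - 1/K` for the nonnegative matrix `M'`; a nonnegative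
matrix with row sums at most `λ` is monotone and `λ`-Lipschitz for the sup norm. -/

open Matrix

namespace Matrix

variable {ι : Type*}

/-- `diagonal φ⁻¹ * A * diagonal φ`, written entrywise. -/
noncomputable def conjDiagonal (A : Matrix ι ι ℝ) (φ : ι → ℝ) : Matrix ι ι ℝ :=
  of fun i j => (φ i)⁻¹ * A i j * φ j

theorem conjDiagonal_nonneg {A : Matrix ι ι ℝ} (hA : ∀ i j, 0 ≤ A i j) {φ : ι → ℝ}
    (hφ : ∀ i, 0 < φ i) (i j : ι) : 0 ≤ conjDiagonal A φ i j :=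
  mul_nonneg (mul_nonneg (inv_nonneg.2 (hφ i).le) (hA i j)) (hφ j).le

variable [Fintype ι]

theorem conjDiagonal_mulVec_apply (A : Matrix ι ι ℝ) (φ w : ι → ℝ) (i : ι) :
    (conjDiagonal A φ *ᵥ w) i = (φ i)⁻¹ * (A *ᵥ fun j => φ j * w j) i := by
  simp only [conjDiagonal, mulVec, dotProduct, of_apply, Finset.mul_sum, mul_assoc]

theorem sum_conjDiagonal_le {A : Matrix ι ι ℝ} {φ : ι → ℝ} (hAφ : A *ᵥ φ ≤ φ - 1)
    (hφ : ∀ i, 0 < φ i) {K : ℝ} (hK : ∀ i, φ i ≤ K) (i : ι) :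
    ∑ j, conjDiagonal A φ i j ≤ (K - 1) / K := by
  calc ∑ j, conjDiagonal A φ i j = (φ i)⁻¹ * (A *ᵥ φ) i := by
        simp only [conjDiagonal, mulVec, dotProduct, of_apply, Finset.mul_sum, mul_assoc]
    _ ≤ (φ i)⁻¹ * (φ i - 1) := mul_le_mul_of_nonneg_left (hAφ i) (inv_pos.2 (hφ i)).le
    _ = 1 - (φ i)⁻¹ := by field_simp [(hφ i).ne']
    _ ≤ 1 - K⁻¹ := by gcongr; exacts [hφ i, hK i]
    _ = (K - 1) / K := by field_simp [((hφ i).trans_le (hK i)).ne']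

theorem monotone_mulVec_of_nonneg {A : Matrix ι ι ℝ} (hA : ∀ i j, 0 ≤ A i j) :
    Monotone A.mulVec :=
  fun _ _ hvw i => dotProduct_le_dotProduct_of_nonneg_left hvw (hA i)

theorem norm_mulVec_le_of_nonneg_of_sum_le {A : Matrix ι ι ℝ} (hA : ∀ i j, 0 ≤ A i j)
    {r : ℝ} (hr : ∀ i, ∑ j, A i j ≤ r) (v : ι → ℝ) : ‖A *ᵥ v‖ ≤ r * ‖v‖ := by
  cases isEmpty_or_nonempty ι
  · simp [Subsingleton.elim v 0]
  rw [pi_norm_le_iff_of_nonempty]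
  intro i
  calc ‖(A *ᵥ v) i‖ ≤ ∑ j, ‖A i j * v j‖ := norm_sum_le _ _
    _ ≤ ∑ j, A i j * ‖v‖ := by
        gcongr with j
        rw [norm_mul, Real.norm_of_nonneg (hA i j)]
        exact mul_le_mul_of_nonneg_left (norm_le_pi_norm v j) (hA i j)
    _ = (∑ j, A i j) * ‖v‖ := (Finset.sum_mul _ _ _).symm
    _ ≤ r * ‖v‖ := by gcongr; exact hr i

end Matrix

theorem mulVec_ite_col_apply {n : ℕ} (M : Matrix (Fin n) (Fin n) ℝ) (c : Fin n)
    (u v : Fin n → ℝ) (i : Fin n) :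
    ((of fun i j => if j = c then u i else M i j) *ᵥ v) i = u i * v c + (colZero M c *ᵥ v) i := by
  simp [mulVec, dotProduct, colZero, ite_mul, Finset.sum_ite, Finset.filter_eq']

/-- The paper's `M_(c,φ)`. -/
noncomputable def modifiedMatrix {n : ℕ} (M : Matrix (Fin n) (Fin n) ℝ) (c : Fin n)
    (φ : Fin n → ℝ) : Matrix (Fin n) (Fin n) ℝ :=
  of fun i j => if j = c then (φ c)⁻¹ * (φ i - 1 - (colZero M c *ᵥ φ) i) else M i j

theorem modifiedMatrix_mulVec_self {n : ℕ} (M : Matrix (Fin n) (Fin n) ℝ) (c : Fin n)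
    {φ : Fin n → ℝ} (hc : φ c ≠ 0) : modifiedMatrix M c φ *ᵥ φ = φ - 1 := by
  ext i
  rw [modifiedMatrix, mulVec_ite_col_apply, mul_comm, ← mul_assoc, mul_inv_cancel₀ hc, one_mul]
  simp

theorem modifiedMatrix_nonneg {n : ℕ} {M : Matrix (Fin n) (Fin n) ℝ} (hM : ∀ i j, 0 ≤ M i j)
    {c : Fin n} {φ : Fin n → ℝ} (hc : 0 < φ c) (hineq : ∀ i, 1 + (colZero M c *ᵥ φ) i ≤ φ i)
    (i j : Fin n) : 0 ≤ modifiedMatrix M c φ i j := by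
  rw [modifiedMatrix, of_apply]
  split_ifs
  · exact mul_nonneg (inv_nonneg.2 hc.le) (by linarith [hineq i])
  · exact hM i j

theorem scaled_modified_matrix_contraction_general {n : ℕ} (M : Matrix (Fin n) (Fin n) ℝ)
    (c : Fin n)
    (hpos : ∀ i j, 0 ≤ M i j)
    (φ : Fin n → ℝ) (hφ : ∀ i, 0 < φ i)
    (hineq : ∀ i, 1 + (colZero M c).mulVec φ i ≤ φ i)
    (K : ℝ) (hK : ∀ i, φ i ≤ K)
    (Mcφ : Matrix (Fin n) (Fin n) ℝ)
    (hdef : Mcφ = Matrix.of fun i j =>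
        if j = c then (φ c)⁻¹ * (φ i - 1 - (colZero M c).mulVec φ i) else M i j)
    (M' : Matrix (Fin n) (Fin n) ℝ)
    (hM' : M' = Matrix.of fun i j => (φ i)⁻¹ * Mcφ i j * φ j) :
    (∀ w : Fin n → ℝ, ∀ i,
        (φ i)⁻¹ * Mcφ.mulVec (fun j => φ j * w j) i = M'.mulVec w i) ∧
    (∀ i j, 0 ≤ M' i j) ∧
    (∀ i, ∑ j, M' i j ≤ (K - 1) / K) ∧
    Monotone M'.mulVec ∧
    (∀ v w : Fin n → ℝ, ‖M'.mulVec v - M'.mulVec w‖ ≤ (K - 1) / K * ‖v - w‖) := by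
  change Mcφ = modifiedMatrix M c φ at hdef
  change M' = conjDiagonal Mcφ φ at hM'
  subst hdef hM'
  have hnonneg := conjDiagonal_nonneg (modifiedMatrix_nonneg hpos (hφ c) hineq) hφ
  have hsum := sum_conjDiagonal_le (modifiedMatrix_mulVec_self M c (hφ c).ne').le hφ hK
  refine ⟨fun w i => (conjDiagonal_mulVec_apply _ φ w i).symm, hnonneg, hsum,
    monotone_mulVec_of_nonneg hnonneg, fun v w => ?_⟩
  rw [← mulVec_sub]
  exact norm_mulVec_le_of_nonneg_of_sum_le hnonneg hsum (v - w)

/-- Corollary `coro-equiv`: with `φ > 0`, `φ ≥ 1 + M_(c)φ` and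
`K ≥ ‖φ‖∞`, the map `w ↦ φ⁻¹·(M_(c,φ)(φ·w))` is given by the matrix
`M'_{ij} = φ_i⁻¹ (M_(c,φ))_{ij} φ_j`, which has nonnegative entries and row
sums at most `λ = (K-1)/K`; hence this map is order-preserving and a sup-norm
contraction with factor `λ`. -/
theorem scaled_modified_matrix_contraction {n : ℕ} (M : Matrix (Fin n) (Fin n) ℝ)
    (c : Fin n)
    (hpos : ∀ i j, 0 ≤ M i j)
    (hstoch : ∀ i, ∑ j, M i j = 1)
    (φ : Fin n → ℝ) (hφ : ∀ i, 0 < φ i)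
    (hineq : ∀ i, 1 + (colZero M c).mulVec φ i ≤ φ i)
    (K : ℝ) (hK1 : 1 ≤ K) (hK : ∀ i, φ i ≤ K)
    (Mcφ : Matrix (Fin n) (Fin n) ℝ)
    (hdef : Mcφ = Matrix.of fun i j =>
        if j = c then (φ c)⁻¹ * (φ i - 1 - (colZero M c).mulVec φ i) else M i j)
    (M' : Matrix (Fin n) (Fin n) ℝ)
    (hM' : M' = Matrix.of fun i j => (φ i)⁻¹ * Mcφ i j * φ j) :
    (∀ w : Fin n → ℝ, ∀ i,
        (φ i)⁻¹ * Mcφ.mulVec (fun j => φ j * w j) i = M'.mulVec w i) ∧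
    (∀ i j, 0 ≤ M' i j) ∧
    (∀ i, ∑ j, M' i j ≤ (K - 1) / K) ∧
    Monotone M'.mulVec ∧
    (∀ v w : Fin n → ℝ, ‖M'.mulVec v - M'.mulVec w‖ ≤ (K - 1) / K * ‖v - w‖) :=
  scaled_modified_matrix_contraction_general M c hpos φ hφ hineq K hK Mcφ hdef M' hM'
end

section
/- Let f : ℝⁿ → ℝⁿ be order-preserving and additively homogeneous, let φ ∈ ℝⁿ have strictly positive coordinates, let c be a state, and define the transformed map g by g(w) = φ⁻¹·(η(φ − 1) + f(v)) where η = w_c and v = φ·(w − w_c·1). Then (η, v) with v_c = 0 solves the additive eigenproblem η·1 + v = f(v) if and only if w = η·1 + φ⁻¹·v is a fixed point of g. -/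
theorem inv_mul_sub_one_add_eq_add_inv_mul_iff {K : Type*} [Field K] {a η x y : K} (ha : a ≠ 0) :
    a⁻¹ * (η * (a - 1) + y) = η + a⁻¹ * x ↔ η + x = y := by
  have hlhs : a⁻¹ * (η * (a - 1) + y) = η + a⁻¹ * (y - η) := by field_simp; ring
  rw [hlhs, add_right_inj, mul_right_inj' (inv_ne_zero ha), sub_eq_iff_eq_add', eq_comm]

theorem additive_eigenproblem_iff_fixed_point_general {n : ℕ} (c : Fin n)
    (f : (Fin n → ℝ) → (Fin n → ℝ))
    (φ : Fin n → ℝ) (hφ : ∀ i, 0 < φ i)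
    (g : (Fin n → ℝ) → (Fin n → ℝ))
    (hg : ∀ w, g w = fun i =>
        (φ i)⁻¹ * (w c * (φ i - 1) + f (fun j => φ j * (w j - w c)) i)) :
    ∀ (η : ℝ) (v : Fin n → ℝ), v c = 0 →
      ((fun i => η + v i) = f v ↔
        g (fun i => η + (φ i)⁻¹ * v i) = fun i => η + (φ i)⁻¹ * v i) := by
  intro η v hvc
  have hwc : η + (φ c)⁻¹ * v c = η := by simp [hvc]
  have hv : (fun j => φ j * (η + (φ j)⁻¹ * v j - η)) = v :=
    funext fun j => by rw [add_sub_cancel_left, mul_inv_cancel_left₀ (hφ j).ne']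
  rw [hg, hwc, hv, funext_iff, funext_iff]
  exact forall_congr' fun i => (inv_mul_sub_one_add_eq_add_inv_mul_iff (hφ i).ne').symm

/-- for an order-preserving, additively homogeneous `f` and a
strictly positive vector `φ`, under the transformation
`g(w) = φ⁻¹·(η(φ - 1) + f(v))` with `η = w_c` and `v = φ·(w - w_c·1)`, the
pair `(η, v)` with `v_c = 0` solves the additive eigenproblem `η·1 + v = f(v)`
iff `w = η·1 + φ⁻¹·v` is a fixed point of `g`. -/
theorem additive_eigenproblem_iff_fixed_point {n : ℕ} (c : Fin n)
    (f : (Fin n → ℝ) → (Fin n → ℝ)) (hmono : Monotone f)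
    (hhom : ∀ (t : ℝ) (v : Fin n → ℝ), f (fun i => t + v i) = fun i => t + f v i)
    (φ : Fin n → ℝ) (hφ : ∀ i, 0 < φ i)
    (g : (Fin n → ℝ) → (Fin n → ℝ))
    (hg : ∀ w, g w = fun i =>
        (φ i)⁻¹ * (w c * (φ i - 1) + f (fun j => φ j * (w j - w c)) i)) :
    ∀ (η : ℝ) (v : Fin n → ℝ), v c = 0 →
      ((fun i => η + v i) = f v ↔
        g (fun i => η + (φ i)⁻¹ * v i) = fun i => η + (φ i)⁻¹ * v i) :=
  additive_eigenproblem_iff_fixed_point_general c f φ hφ g hg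
end

section
/- Under the assumption that for every pair of policies the associated nonnegative matrix M^(σδ) has spectral radius at most ω < 1, there exists, for every λ with ω < λ < 1, a strictly positive vector φ ∈ ℝⁿ such that M^(σδ) φ ≤ λ φ componentwise simultaneously for all pairs of policies (σ, δ). -/
/-!
Write `Mₚ = λ⁻¹ M^(p)` for a policy pair `p` and `vₚ = (1 - Mₚ)⁻¹ 1`, so that `Mₚ vₚ = vₚ - 1`.
The hypothesis controls only the real spectrum, so `(1 - Mₚ)⁻¹` is not given by a convergent
Neumann series; instead, `1 - s Mₚ` is invertible for all `s ∈ [0, 1]`, and continuous induction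
in `s` (a Neumann series for each small step, `1 - s M = (1 - s₀ M)(1 - (s - s₀)(1 - s₀ M)⁻¹ M)`)
shows that `(1 - Mₚ)⁻¹` is entrywise nonnegative.

Policy iteration then finishes the proof: take `p` maximising `∑ᵢ vₚ i` and let `q` pick in each
row the largest entry of `M vₚ`, which is a policy by rectangularity. Then
`v_q - vₚ = (1 - M_q)⁻¹ (M_q - Mₚ) vₚ ≥ 0`, so maximality forces `(M_q - Mₚ) vₚ = 0`, whence
`M vₚ ≤ M_q vₚ = vₚ - 1` for every policy pair, and `φ = vₚ ≥ 1`.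
-/

open Matrix Filter Topology Set

section

variable {ι : Type*} [Fintype ι]

section Policies

variable {R : Type*} {C : ι → Type*}

def policyMatrix (row : ∀ i, C i → ι → R) (p : ∀ i, C i) : Matrix ι ι R :=
  of fun i j => row i (p i) j

theorem exists_policy_forall_mulVec_le [Semiring R] [LinearOrder R] [∀ i, Finite (C i)]
    [∀ i, Nonempty (C i)] (row : ∀ i, C i → ι → R) (v : ι → R) :
    ∃ q, ∀ p, policyMatrix row p *ᵥ v ≤ policyMatrix row q *ᵥ v := by
  choose q hq using fun i => Finite.exists_max fun c : C i => ∑ j, row i c j * v j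
  exact ⟨q, fun p i => hq i (p i)⟩

end Policies

variable [DecidableEq ι]

section InverseIdentities

variable {R : Type*} [CommRing R]

theorem mulVec_nonsing_inv_mulVec {A : Matrix ι ι R} (hA : IsUnit A) (v : ι → R) :
    A *ᵥ (A⁻¹ *ᵥ v) = v := by
  rw [mulVec_mulVec, mul_nonsing_inv _ ((isUnit_iff_isUnit_det _).mp hA), one_mulVec]

theorem nonsing_inv_mulVec_mulVec {A : Matrix ι ι R} (hA : IsUnit A) (v : ι → R) :
    A⁻¹ *ᵥ (A *ᵥ v) = v := by
  rw [mulVec_mulVec, nonsing_inv_mul _ ((isUnit_iff_isUnit_det _).mp hA), one_mulVec]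

theorem mulVec_inv_one_sub_mulVec {P : Matrix ι ι R} (hP : IsUnit (1 - P)) (b : ι → R) :
    P *ᵥ ((1 - P)⁻¹ *ᵥ b) = (1 - P)⁻¹ *ᵥ b - b := by
  have h := mulVec_nonsing_inv_mulVec hP b
  rw [sub_mulVec, one_mulVec] at h
  linear_combination -h

theorem inv_one_sub_mulVec_sub_inv_one_sub_mulVec {P Q : Matrix ι ι R} (hP : IsUnit (1 - P))
    (hQ : IsUnit (1 - Q)) (b : ι → R) :
    (1 - Q)⁻¹ *ᵥ b - (1 - P)⁻¹ *ᵥ b = (1 - Q)⁻¹ *ᵥ ((Q - P) *ᵥ ((1 - P)⁻¹ *ᵥ b)) := by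
  rw [← nonsing_inv_mulVec_mulVec hQ ((1 - Q)⁻¹ *ᵥ b - (1 - P)⁻¹ *ᵥ b)]
  congr 1
  rw [mulVec_sub, mulVec_nonsing_inv_mulVec hQ, sub_mulVec, one_mulVec, sub_mulVec,
    mulVec_inv_one_sub_mulVec hP]
  abel

end InverseIdentities

variable (ι) in
def nonnegMatrices : Subsemiring (Matrix ι ι ℝ) where
  carrier := {A | ∀ i j, 0 ≤ A i j}
  mul_mem' hA hB i j := Finset.sum_nonneg fun k _ => mul_nonneg (hA i k) (hB k j)
  one_mem' i j := by by_cases h : i = j <;> simp [one_apply, h]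
  add_mem' hA hB i j := add_nonneg (hA i j) (hB i j)
  zero_mem' _ _ := le_rfl

theorem isClosed_nonnegMatrices : IsClosed (nonnegMatrices ι : Set (Matrix ι ι ℝ)) := by
  show IsClosed {A : Matrix ι ι ℝ | ∀ i j, 0 ≤ A i j}
  simp only [ofPred_forall]
  exact isClosed_iInter fun i => isClosed_iInter fun j =>
    isClosed_le continuous_const ((continuous_apply j).comp (continuous_apply i))

theorem smul_mem_nonnegMatrices {c : ℝ} (hc : 0 ≤ c) {A : Matrix ι ι ℝ}
    (hA : A ∈ nonnegMatrices ι) : c • A ∈ nonnegMatrices ι :=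
  fun i j => mul_nonneg hc (hA i j)

theorem mulVec_nonneg_of_mem_nonnegMatrices {A : Matrix ι ι ℝ} (hA : A ∈ nonnegMatrices ι)
    {v : ι → ℝ} (hv : 0 ≤ v) : 0 ≤ A *ᵥ v :=
  fun i => Finset.sum_nonneg fun j _ => mul_nonneg (hA i j) (hv j)

section NeumannSeries

attribute [local instance] Matrix.linftyOpNormedRing Matrix.linftyOpNormedAlgebra

theorem inv_one_sub_mem_nonnegMatrices {X : Matrix ι ι ℝ} (hX : X ∈ nonnegMatrices ι)
    (hnorm : ‖X‖ < 1) : (1 - X)⁻¹ ∈ nonnegMatrices ι := by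
  rw [nonsing_inv_eq_ringInverse]
  exact isClosed_nonnegMatrices.mem_of_tendsto (hasSum_geom_series_inverse X hnorm)
    (Eventually.of_forall fun _ => sum_mem fun k _ => pow_mem hX k)

theorem inv_one_sub_smul_mem_nonnegMatrices {M : Matrix ι ι ℝ} (hM : M ∈ nonnegMatrices ι)
    {c : ℝ} (hc : 0 ≤ c) (hunit : ∀ s ∈ Icc 0 c, IsUnit (1 - s • M)) :
    (1 - c • M)⁻¹ ∈ nonnegMatrices ι := by
  set S := {s : ℝ | (1 - s • M)⁻¹ ∈ nonnegMatrices ι}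
  suffices Icc 0 c ⊆ S from this ⟨hc, le_rfl⟩
  refine IsClosed.Icc_subset_of_forall_mem_nhdsWithin ?closed ?zero ?step
  case closed =>
    have hlin : Continuous fun s : ℝ => 1 - s • M := by fun_prop
    have hcont : ContinuousOn (fun s : ℝ => (1 - s • M)⁻¹) (Icc 0 c) := fun s hs =>
      (continuousAt_matrix_inv _ ((NormedRing.inverse_continuousAt
        ((isUnit_iff_isUnit_det _).mp (hunit s hs)).unit))).comp_continuousWithinAt
        (f := fun s : ℝ => 1 - s • M) hlin.continuousWithinAt
    rw [inter_comm]
    exact hcont.preimage_isClosed_of_isClosed isClosed_Icc isClosed_nonnegMatrices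
  case zero =>
    show (1 - (0 : ℝ) • M)⁻¹ ∈ nonnegMatrices ι
    rw [zero_smul, sub_zero, inv_one]
    exact one_mem _
  case step =>
    rintro s₀ ⟨hs₀, hs₀0, hs₀c⟩
    set R₀ := (1 - s₀ • M)⁻¹
    have hsmall : ∀ᶠ s in 𝓝[>] s₀, ‖(s - s₀) • (R₀ * M)‖ < 1 := by
      have : Tendsto (fun s : ℝ => ‖(s - s₀) • (R₀ * M)‖) (𝓝 s₀) (𝓝 0) := by
        have hcont : Continuous fun s : ℝ => ‖(s - s₀) • (R₀ * M)‖ := by fun_prop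
        simpa using hcont.tendsto s₀
      exact nhdsWithin_le_nhds (this.eventually (gt_mem_nhds one_pos))
    filter_upwards [hsmall, self_mem_nhdsWithin] with s hs (hlt : s₀ < s)
    have hfactor : 1 - s • M = (1 - s₀ • M) * (1 - (s - s₀) • (R₀ * M)) := by
      rw [mul_sub, mul_one, mul_smul_comm, ← mul_assoc, mul_nonsing_inv _
        ((isUnit_iff_isUnit_det _).mp (hunit s₀ ⟨hs₀0, hs₀c.le⟩)), one_mul, sub_smul]
      abel
    show (1 - s • M)⁻¹ ∈ nonnegMatrices ι
    rw [hfactor, Matrix.mul_inv_rev]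
    exact mul_mem (inv_one_sub_mem_nonnegMatrices
      (smul_mem_nonnegMatrices (sub_nonneg.2 hlt.le) (mul_mem hs₀ hM)) hs) hs₀

theorem isUnit_one_sub_smul_and_inv_mem_nonnegMatrices {M : Matrix ι ι ℝ}
    (hM : M ∈ nonnegMatrices ι) {c : ℝ} (hc : 0 ≤ c)
    (hρ : spectralRadius ℝ M < (ENNReal.ofReal c)⁻¹) :
    IsUnit (1 - c • M) ∧ (1 - c • M)⁻¹ ∈ nonnegMatrices ι := by
  have hunit : ∀ s ∈ Icc 0 c, IsUnit (1 - s • M) := fun s hs =>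
    spectrum.isUnit_one_sub_smul_of_lt_inv_radius <| calc
      (‖s‖₊ : ENNReal) = ENNReal.ofReal s := by
        rw [← enorm_eq_nnnorm, Real.enorm_eq_ofReal hs.1]
      _ ≤ ENNReal.ofReal c := ENNReal.ofReal_le_ofReal hs.2
      _ < (spectralRadius ℝ M)⁻¹ := ENNReal.lt_inv_iff_lt_inv.mp hρ
  exact ⟨hunit c ⟨hc, le_rfl⟩, inv_one_sub_smul_mem_nonnegMatrices hM hc hunit⟩

end NeumannSeries

theorem exists_forall_policyMatrix_mulVec_le_sub_one {C : ι → Type*} [∀ i, Finite (C i)]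
    [∀ i, Nonempty (C i)] (row : ∀ i, C i → ι → ℝ) (hrow : ∀ i c j, 0 ≤ row i c j)
    (hunit : ∀ p, IsUnit (1 - policyMatrix row p))
    (hinv : ∀ p, (1 - policyMatrix row p)⁻¹ ∈ nonnegMatrices ι) :
    ∃ φ : ι → ℝ, 1 ≤ φ ∧ ∀ p, policyMatrix row p *ᵥ φ ≤ φ - 1 := by
  set P := policyMatrix row
  set value : (∀ i, C i) → ι → ℝ := fun p => (1 - P p)⁻¹ *ᵥ 1
  have hvalue : ∀ p, P p *ᵥ value p = value p - 1 := fun p =>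
    mulVec_inv_one_sub_mulVec (hunit p) 1
  obtain ⟨p, hp⟩ := Finite.exists_max fun p => ∑ i, value p i
  obtain ⟨q, hq⟩ := exists_policy_forall_mulVec_le row (value p)
  have hgain : value q - value p = (1 - P q)⁻¹ *ᵥ ((P q - P p) *ᵥ value p) :=
    inv_one_sub_mulVec_sub_inv_one_sub_mulVec (hunit p) (hunit q) 1
  have hle : value p ≤ value q := by
    refine sub_nonneg.mp (hgain ▸ mulVec_nonneg_of_mem_nonnegMatrices (hinv q) ?_)
    rw [sub_mulVec]
    exact sub_nonneg.mpr (hq p)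
  have heq : value p = value q := funext fun i =>
    (Finset.sum_eq_sum_iff_of_le fun i _ => hle i).mp
      (le_antisymm (Finset.sum_le_sum fun i _ => hle i) (hp q)) i (Finset.mem_univ i)
  have hbest : P q *ᵥ value p = P p *ᵥ value p := by
    have : (P q - P p) *ᵥ value p = 0 := by
      rw [← mulVec_nonsing_inv_mulVec (hunit q) ((P q - P p) *ᵥ value p), ← hgain, heq,
        sub_self, mulVec_zero]
    rwa [sub_mulVec, sub_eq_zero] at this
  refine ⟨value p, ?_, fun p' => (hq p').trans_eq (by rw [hbest, hvalue])⟩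
  have h0 : 0 ≤ P p *ᵥ value p := mulVec_nonneg_of_mem_nonnegMatrices (fun i j => hrow i (p i) j)
    (mulVec_nonneg_of_mem_nonnegMatrices (hinv p) zero_le_one)
  rw [hvalue] at h0
  exact sub_nonneg.mp h0

end

theorem simultaneous_scaling_vector_general {n : ℕ} (A B : Fin n → Type*)
    [∀ i, Fintype (A i)] [∀ i, Nonempty (A i)]
    [∀ i, Fintype (B i)] [∀ i, Nonempty (B i)]
    (row : ∀ i : Fin n, A i → B i → Fin n → ℝ)
    (hpos : ∀ i a b j, 0 ≤ row i a b j)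
    (ω : ℝ) (hω0 : 0 ≤ ω)
    (hρ : ∀ (σ : ∀ i, A i) (δ : ∀ i, B i),
        spectralRadius ℝ (Matrix.of fun i j => row i (σ i) (δ i) j) ≤
          ENNReal.ofReal ω) :
    ∀ lam : ℝ, ω < lam → lam < 1 →
      ∃ φ : Fin n → ℝ, (∀ i, 0 < φ i) ∧
        ∀ (σ : ∀ i, A i) (δ : ∀ i, B i), ∀ i,
          (Matrix.of fun i' j => row i' (σ i') (δ i') j).mulVec φ i ≤ lam * φ i := by
  intro lam hωlam _
  have hlam : 0 < lam := hω0.trans_lt hωlam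
  let scaledRow : ∀ i, A i × B i → Fin n → ℝ := fun i c j => lam⁻¹ * row i c.1 c.2 j
  have hscaled : ∀ p : ∀ i, A i × B i, policyMatrix scaledRow p =
      lam⁻¹ • Matrix.of fun i j => row i (p i).1 (p i).2 j := fun _ => rfl
  have hresolvent : ∀ p, IsUnit (1 - policyMatrix scaledRow p) ∧
      (1 - policyMatrix scaledRow p)⁻¹ ∈ nonnegMatrices (Fin n) := fun p => by
    rw [hscaled]
    refine isUnit_one_sub_smul_and_inv_mem_nonnegMatrices (fun i j => hpos _ _ _ _)
      (inv_nonneg.2 hlam.le) ?_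
    rw [ENNReal.ofReal_inv_of_pos hlam, inv_inv]
    exact (hρ (fun i => (p i).1) (fun i => (p i).2)).trans_lt
      ((ENNReal.ofReal_lt_ofReal_iff hlam).2 hωlam)
  obtain ⟨φ, hφ1, hφ⟩ := exists_forall_policyMatrix_mulVec_le_sub_one scaledRow
    (fun i c j => mul_nonneg (inv_nonneg.2 hlam.le) (hpos _ _ _ _))
    (fun p => (hresolvent p).1) (fun p => (hresolvent p).2)
  refine ⟨φ, fun i => one_pos.trans_le (hφ1 i), fun σ δ i => ?_⟩
  have h := hφ (fun i => (σ i, δ i)) i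
  rw [hscaled, smul_mulVec, Pi.smul_apply, smul_eq_mul, Pi.sub_apply, Pi.one_apply,
    inv_mul_le_iff₀ hlam] at h
  linarith

/-- Theorem `general-scaling` for games: given a rectangular
family of nonnegative matrices `M^(σδ)` (the `i`-th row depends only on
`(σ i, δ i)`) whose spectral radii are all at most `ω < 1`, for every
`ω < λ < 1` there exists a strictly positive vector `φ` with
`M^(σδ) φ ≤ λ φ` simultaneously for all pairs of policies `(σ, δ)`. -/
theorem simultaneous_scaling_vector {n : ℕ} (A B : Fin n → Type*)
    [∀ i, Fintype (A i)] [∀ i, Nonempty (A i)]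
    [∀ i, Fintype (B i)] [∀ i, Nonempty (B i)]
    (row : ∀ i : Fin n, A i → B i → Fin n → ℝ)
    (hpos : ∀ i a b j, 0 ≤ row i a b j)
    (ω : ℝ) (hω0 : 0 ≤ ω) (hω1 : ω < 1)
    (hρ : ∀ (σ : ∀ i, A i) (δ : ∀ i, B i),
        spectralRadius ℝ (Matrix.of fun i j => row i (σ i) (δ i) j) ≤
          ENNReal.ofReal ω) :
    ∀ lam : ℝ, ω < lam → lam < 1 →
      ∃ φ : Fin n → ℝ, (∀ i, 0 < φ i) ∧
        ∀ (σ : ∀ i, A i) (δ : ∀ i, B i), ∀ i,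
          (Matrix.of fun i' j => row i' (σ i') (δ i') j).mulVec φ i ≤ lam * φ i :=
  simultaneous_scaling_vector_general A B row hpos ω hω0 hρ
end
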